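/- arXiv:2503.05089 — 7 statements merged into one kernel-verified Lean document; each statement's English description precedes it below -/
import Mathlib

section
/- Let n, r, q be positive integers with r, q ≥ 2 and set k = ⌊(n+q−1)/(r+q−1)⌋. Then there exists a q-colouring of the r-element subsets of [n] such that every monochromatic matching has size at most k. -/
/-!
Split `[n]` into `q` blocks: for `i < q - 1` the block `[i k, (i + 1) k)`, and the last block
`[(q - 1) k, n)`. Colour an `r`-set by the block of its least element. In a colour `i < q - 1`
a matching has distinct least elements, all in a block of `k` vertices, so it has at most `k`
edges. In the last colour every edge lies inside the last block, of size `n - (q - 1) k`, and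
`k = ⌊(n + q - 1) / (r + q - 1)⌋` is exactly what makes `n - (q - 1) k < (k + 1) r`.
-/

open Finset

theorem Finset.card_mul_le_card_of_pairwiseDisjoint {α : Type*} [DecidableEq α]
    {M : Finset (Finset α)} {s : Finset α} {m : ℕ} (hM : (M : Set (Finset α)).PairwiseDisjoint id)
    (hm : ∀ e ∈ M, m ≤ #(e ∩ s)) : #M * m ≤ #s :=
  calc #M * m ≤ ∑ e ∈ M, #(e ∩ s) := card_nsmul_le_sum M _ m hm
    _ = #(M.biUnion (· ∩ s)) :=
      (card_biUnion fun _ he _ hf hef => (hM he hf hef).mono inf_le_left inf_le_left).symm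
    _ ≤ #s := card_le_card (biUnion_subset.2 fun _ _ => inter_subset_right)

theorem Fin.card_filter_val_mem_Ico_le (n a b : ℕ) : #{v : Fin n | (v : ℕ) ∈ Ico a b} ≤ b - a :=
  calc #{v : Fin n | (v : ℕ) ∈ Ico a b} ≤ #(Ico a b) :=
        card_le_card_of_injOn Fin.val (fun v hv => by simpa using hv) Fin.val_injective.injOn
    _ = b - a := Nat.card_Ico a b

def vertexClass (k q v : ℕ) : ℕ := if (q - 1) * k ≤ v then q - 1 else v / k

section vertexClass

variable {k q v i : ℕ}

theorem vertexClass_lt (hq : 0 < q) : vertexClass k q v < q := by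
  unfold vertexClass
  split_ifs with h
  · omega
  · exact lt_of_lt_of_le (Nat.div_lt_of_lt_mul (by rwa [not_le, mul_comm] at h)) (by omega)

theorem mul_le_of_vertexClass_eq (h : vertexClass k q v = i) : i * k ≤ v := by
  unfold vertexClass at h
  split_ifs at h with hv
  · rwa [← h]
  · exact h ▸ Nat.div_mul_le_self v k

theorem lt_of_vertexClass_eq (h : vertexClass k q v = i) (hi : i < q - 1) : v < i * k + k := by
  unfold vertexClass at h
  split_ifs at h with hv
  · omega
  · exact h ▸ Nat.lt_div_mul_add (Nat.pos_of_ne_zero fun hk => by simp [hk] at hv)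

end vertexClass

def minVertexClass (k q : ℕ) {n : ℕ} (e : Finset (Fin n)) : ℕ :=
  if h : e.Nonempty then vertexClass k q (e.min' h) else 0

section minVertexClass

variable {n k q i : ℕ} {M : Finset (Finset (Fin n))}

theorem minVertexClass_lt (hq : 0 < q) (e : Finset (Fin n)) : minVertexClass k q e < q := by
  unfold minVertexClass
  split_ifs
  exacts [vertexClass_lt hq, hq]

theorem card_le_of_minVertexClass_eq_of_lt (hM : (M : Set (Finset (Fin n))).PairwiseDisjoint id)
    (hne : ∀ e ∈ M, e.Nonempty) (hcol : ∀ e ∈ M, minVertexClass k q e = i) (hi : i < q - 1) :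
    #M ≤ k := by
  set block : Finset (Fin n) := {v | (v : ℕ) ∈ Ico (i * k) (i * k + k)}
  have hmeet : ∀ e ∈ M, 1 ≤ #(e ∩ block) := by
    intro e he
    have hv := hcol e he
    rw [minVertexClass, dif_pos (hne e he)] at hv
    refine one_le_card.2 ⟨e.min' (hne e he), mem_inter.2 ⟨min'_mem _ _, ?_⟩⟩
    simpa [block] using ⟨mul_le_of_vertexClass_eq hv, lt_of_vertexClass_eq hv hi⟩
  simpa using (card_mul_le_card_of_pairwiseDisjoint hM hmeet).trans
    (Fin.card_filter_val_mem_Ico_le n _ _)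

theorem card_mul_le_of_minVertexClass_eq {r : ℕ}
    (hM : (M : Set (Finset (Fin n))).PairwiseDisjoint id) (hr : 0 < r)
    (hcard : ∀ e ∈ M, #e = r) (hcol : ∀ e ∈ M, minVertexClass k q e = i) :
    #M * r ≤ n - i * k := by
  set block : Finset (Fin n) := {v | (v : ℕ) ∈ Ico (i * k) n}
  have hinside : ∀ e ∈ M, r ≤ #(e ∩ block) := by
    intro e he
    have hne : e.Nonempty := card_pos.1 (hcard e he ▸ hr)
    have hv := hcol e he
    rw [minVertexClass, dif_pos hne] at hv
    rw [inter_eq_left.2, hcard e he]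
    intro v hve
    simpa [block] using (mul_le_of_vertexClass_eq hv).trans (Fin.le_def.1 (min'_le e v hve))
  exact (card_mul_le_card_of_pairwiseDisjoint hM hinside).trans
    (Fin.card_filter_val_mem_Ico_le n _ _)

end minVertexClass

theorem le_div_of_mul_le_sub {n r q m : ℕ} (hr : 0 < r) (hq : 0 < q)
    (h : m * r ≤ n - (q - 1) * ((n + q - 1) / (r + q - 1))) :
    m ≤ (n + q - 1) / (r + q - 1) := by
  obtain ⟨q, rfl⟩ : ∃ q', q = q' + 1 := ⟨q - 1, by omega⟩
  rw [Nat.add_sub_cancel, show n + (q + 1) - 1 = n + q by omega,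
    show r + (q + 1) - 1 = r + q by omega] at *
  have hk : n + q < ((n + q) / (r + q) + 1) * (r + q) :=
    Nat.lt_mul_of_div_lt (Nat.lt_succ_self _) (by omega)
  generalize (n + q) / (r + q) = k at *
  by_contra! hm
  have : (k + 1) * r ≤ m * r := Nat.mul_le_mul_right r hm
  have : 0 < (k + 1) * r := by positivity
  have : (k + 1) * (r + q) = (k + 1) * r + q * k + q := by ring
  omega

theorem afl_optimal_colouring_general (n r q : ℕ) (hr : 2 ≤ r) (hq : 2 ≤ q) :
    ∃ c : Finset (Fin n) → Fin q,
      ∀ M : Finset (Finset (Fin n)),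
        (∀ e ∈ M, e.card = r) →
        (∀ e ∈ M, ∀ f ∈ M, e ≠ f → Disjoint e f) →
        (∃ i : Fin q, ∀ e ∈ M, c e = i) →
        M.card ≤ (n + q - 1) / (r + q - 1) := by
  set k := (n + q - 1) / (r + q - 1)
  refine ⟨fun e => ⟨minVertexClass k q e, minVertexClass_lt (by omega) e⟩, ?_⟩
  rintro M hcard hdisj ⟨i, hi⟩
  have hM : (M : Set (Finset (Fin n))).PairwiseDisjoint id := fun e he f hf => hdisj e he f hf
  have hcol : ∀ e ∈ M, minVertexClass k q e = i := fun e he => congrArg Fin.val (hi e he)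
  rcases lt_or_ge (i : ℕ) (q - 1) with hlow | hlast
  · exact card_le_of_minVertexClass_eq_of_lt hM
      (fun e he => card_pos.1 (by rw [hcard e he]; omega)) hcol hlow
  · have hi_eq : (i : ℕ) = q - 1 := by omega
    have hcover := card_mul_le_of_minVertexClass_eq hM (by omega) hcard hcol
    exact le_div_of_mul_le_sub (by omega) (by omega) (hi_eq ▸ hcover)

/-- **Optimality of the Alon–Frankl–Lovász theorem.** For positive integers `n, r, q`
with `r, q ≥ 2` and `k = ⌊(n + q - 1) / (r + q - 1)⌋`, there is a `q`-colouring of the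
`r`-element subsets of `[n]` in which every monochromatic matching has size at most `k`. -/
theorem afl_optimal_colouring (n r q : ℕ) (hn : 0 < n) (hr : 2 ≤ r) (hq : 2 ≤ q) :
    ∃ c : Finset (Fin n) → Fin q,
      ∀ M : Finset (Finset (Fin n)),
        (∀ e ∈ M, e.card = r) →
        (∀ e ∈ M, ∀ f ∈ M, e ≠ f → Disjoint e f) →
        (∃ i : Fin q, ∀ e ∈ M, c e = i) →
        M.card ≤ (n + q - 1) / (r + q - 1) :=
  afl_optimal_colouring_general n r q hr hq
end

section
/- Let k ≥ 1, s ≥ 2 and 1 ≤ b ≤ k be integers, and let n be a positive integer. Suppose F is a family of k-element subsets of [n] such that for every choice of sets F₁, ..., F_s ∈ F (not necessarily distinct) one has |F₁ ∪ F₂ ∪ ⋯ ∪ F_s| ≤ ks − (b−1)(s−1) − 1. Then (s−1)^b · |σ_{k−b}(F)| ≥ |F|. -/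
/-!
Shifting by the compressions `𝓒 {i} {j}` (`i < j`) preserves the union condition and does not
enlarge iterated shadows, so `F` may be assumed shifted, on the ground set `{0, …, m}`.
Write `M = (s-1)(k-b+1) + k - 1` for the bound on unions. If `m < M`, double counting
(LYM) gives `|F| C(k,b) ≤ |∂^b F| C(m+1-k+b, b)`, and `C(m+1-k+b, b) ≤ (s-1)^b C(k,b)`.
Otherwise split `F` along `m`: the members avoiding `m` satisfy the same condition, and
the link of `m` is `(k-1)`-uniform with unions of at most `M - s` elements, because in a
shifted family `s - 1` of `s` link members can trade `m` for distinct unused elements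
below `m`, while the last keeps `m`. The shadows of the two parts embed disjointly into
the shadow of `F`, and induction on `m` closes the argument.
-/

open scoped Classical
open Finset
open scoped FinsetFamily

/-- The `ℓ`-shadow of a family `F` of subsets of `Fin n`: all `ℓ`-element sets contained
in some member of `F`. -/
noncomputable def shadow' (n ℓ : ℕ) (F : Finset (Finset (Fin n))) : Finset (Finset (Fin n)) :=
  Finset.univ.filter fun G : Finset (Fin n) => G.card = ℓ ∧ ∃ A ∈ F, G ⊆ A

theorem Nat.choose_mul_add_le_pow_mul_choose {c m r b : ℕ} (hc : 1 ≤ c) (hb : b ≤ r + 1) :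
    (c * m + r).choose b ≤ c ^ b * (m + r).choose b := by
  have hdesc : (c * m + r).descFactorial b ≤ c ^ b * (m + r).descFactorial b := by
    rw [Nat.descFactorial_eq_prod_range, Nat.descFactorial_eq_prod_range,
      show c ^ b = ∏ _i ∈ range b, c by simp, ← prod_mul_distrib]
    refine prod_le_prod' fun i hi => ?_
    have hir : i ≤ r := by rw [mem_range] at hi; omega
    have : r - i ≤ c * (r - i) := Nat.le_mul_of_pos_left _ hc
    rw [Nat.add_sub_assoc hir, Nat.add_sub_assoc hir, Nat.mul_add]
    omega
  rw [Nat.descFactorial_eq_factorial_mul_choose, Nat.descFactorial_eq_factorial_mul_choose,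
    mul_left_comm] at hdesc
  exact Nat.le_of_mul_le_mul_left hdesc b.factorial_pos

section
variable {α : Type*} [DecidableEq α]

theorem card_mul_choose_le_card_shadow_iterate_mul_choose {𝒜 : Finset (Finset α)} {X : Finset α}
    {k b : ℕ} (h𝒜 : (𝒜 : Set (Finset α)).Sized k) (hX : ∀ A ∈ 𝒜, A ⊆ X) (hbk : b ≤ k) :
    #𝒜 * k.choose b ≤ #(∂^[b] 𝒜) * (#X - (k - b)).choose b := by
  refine card_mul_le_card_mul (fun A G => G ⊆ A) (fun A hA => ?_) (fun G hG => ?_)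
  · calc k.choose b = #(A.powersetCard (k - b)) := by
          rw [card_powersetCard, h𝒜 hA, Nat.choose_symm hbk]
      _ ≤ _ := card_le_card fun G hG => by
          rw [mem_powersetCard] at hG
          rw [mem_bipartiteAbove, mem_shadow_iterate_iff_exists_mem_card_add]
          exact ⟨⟨A, hA, hG.1, by rw [h𝒜 hA, hG.2]; omega⟩, hG.1⟩
  · obtain ⟨A₀, hA₀, hGA₀, -⟩ := mem_shadow_iterate_iff_exists_mem_card_add.1 hG
    have hG : #G = k - b := h𝒜.shadow_iterate hG
    calc #(𝒜.bipartiteBelow _ G) ≤ #(((X \ G).powersetCard b).image (G ∪ ·)) :=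
          card_le_card fun A hA => by
            rw [mem_bipartiteBelow] at hA
            refine mem_image.2 ⟨A \ G, mem_powersetCard.2
              ⟨sdiff_subset_sdiff (hX A hA.1) le_rfl, ?_⟩, union_sdiff_of_subset hA.2⟩
            rw [card_sdiff_of_subset hA.2, h𝒜 hA.1, hG]
            omega
      _ ≤ _ := by
          rw [← hG, ← card_sdiff_of_subset (hGA₀.trans (hX A₀ hA₀)), ← card_powersetCard]
          exact card_image_le

theorem card_le_pow_mul_card_shadow_iterate_of_card_le {𝒜 : Finset (Finset α)} {X : Finset α}
    {k b c : ℕ} (h𝒜 : (𝒜 : Set (Finset α)).Sized k) (hX : ∀ A ∈ 𝒜, A ⊆ X) (hc : 1 ≤ c)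
    (hb : 1 ≤ b) (hbk : b ≤ k) (hXc : #X ≤ c * (k - b + 1) + (k - 1)) :
    #𝒜 ≤ c ^ b * #(∂^[b] 𝒜) := by
  have hchoose : (#X - (k - b)).choose b ≤ c ^ b * k.choose b :=
    calc (#X - (k - b)).choose b ≤ (c * (k - b + 1) + (b - 1)).choose b :=
          Nat.choose_le_choose _ (by omega)
      _ ≤ c ^ b * (k - b + 1 + (b - 1)).choose b :=
          Nat.choose_mul_add_le_pow_mul_choose hc (by omega)
      _ = c ^ b * k.choose b := by rw [show k - b + 1 + (b - 1) = k by omega]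
  refine Nat.le_of_mul_le_mul_right ?_ (Nat.choose_pos hbk)
  calc #𝒜 * k.choose b ≤ #(∂^[b] 𝒜) * (#X - (k - b)).choose b :=
        card_mul_choose_le_card_shadow_iterate_mul_choose h𝒜 hX hbk
    _ ≤ #(∂^[b] 𝒜) * (c ^ b * k.choose b) := Nat.mul_le_mul_left _ hchoose
    _ = c ^ b * #(∂^[b] 𝒜) * k.choose b := by ring

theorem UV.compress_singleton {i j : α} (hij : i ≠ j) (A : Finset α) :
    UV.compress {i} {j} A = if j ∈ A ∧ i ∉ A then insert i (A.erase j) else A := by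
  unfold UV.compress
  by_cases hA : j ∈ A ∧ i ∉ A
  · rw [if_pos (by simpa [and_comm] using hA), if_pos hA]
    ext x
    by_cases hxi : x = i <;> simp [hxi, hij, and_comm]
  · rw [if_neg (by simpa [and_comm] using hA), if_neg hA]

theorem UV.shadow_iterate_compression_subset (i j : α) (b : ℕ) (𝒜 : Finset (Finset α)) :
    ∂^[b] (𝓒 {i} {j} 𝒜) ⊆ 𝓒 {i} {j} (∂^[b] 𝒜) := by
  induction b generalizing 𝒜 with
  | zero => exact subset_rfl
  | succ b ih =>
    rw [Function.iterate_succ_apply, Function.iterate_succ_apply]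
    refine (shadow_monotone.iterate b (UV.shadow_compression_subset_compression_shadow _ _
      fun x hx => ⟨j, mem_singleton_self j, ?_⟩)).trans (ih _)
    rw [mem_singleton.1 hx, erase_singleton, erase_singleton]
    exact UV.isCompressed_self _ _

def UnionBounded (s M : ℕ) (𝒜 : Finset (Finset α)) : Prop :=
  ∀ f : Fin s → Finset α, (∀ t, f t ∈ 𝒜) → #(univ.biUnion f) ≤ M

theorem UnionBounded.mono {s M : ℕ} {𝒜 ℬ : Finset (Finset α)} (h : UnionBounded s M 𝒜)
    (hℬ : ℬ ⊆ 𝒜) : UnionBounded s M ℬ :=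
  fun f hf => h f fun t => hℬ (hf t)

theorem card_le_card_of_forall_mem_of_ne {U V : Finset α} {i j : α}
    (hUV : ∀ x ∈ U, x ≠ i → x ∈ V) (hjV : j ∈ V) (hjU : j ∉ U) : #U ≤ #V :=
  calc #U ≤ #(insert i (V.erase j)) := card_le_card fun x hx => by
        by_cases hxi : x = i
        · simp [hxi]
        · exact mem_insert_of_mem (mem_erase.2 ⟨by rintro rfl; exact hjU hx, hUV x hx hxi⟩)
    _ ≤ #(V.erase j) + 1 := card_insert_le _ _
    _ = #V := card_erase_add_one hjV

theorem UnionBounded.uvCompression {s M : ℕ} {𝒜 : Finset (Finset α)} {i j : α} (hij : i ≠ j)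
    (h : UnionBounded s M 𝒜) : UnionBounded s M (𝓒 {i} {j} 𝒜) := by
  intro f hf
  by_cases hall : ∀ t, f t ∈ 𝒜
  · exact h f hall
  obtain ⟨t₁, ht₁⟩ := not_forall.1 hall
  -- a member outside `𝒜` came from compressing a member of `𝒜`: undo that compression
  set g : Fin s → Finset α := fun t => if f t ∈ 𝒜 then f t else (f t ∪ {j}) \ {i}
  have hg : ∀ t, g t ∈ 𝒜 := fun t => by
    by_cases ht : f t ∈ 𝒜
    · simp [g, ht]
    · simpa [g, ht] using UV.sup_sdiff_mem_of_mem_compression_of_notMem (hf t) ht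
  have hfg : ∀ x ∈ univ.biUnion f, x ≠ i → x ∈ univ.biUnion g := fun x hx hxi => by
    obtain ⟨t, -, hxt⟩ := mem_biUnion.1 hx
    refine mem_biUnion.2 ⟨t, mem_univ _, ?_⟩
    by_cases ht : f t ∈ 𝒜 <;> simp [g, ht, hxt, hxi]
  have hjg : j ∈ univ.biUnion g := mem_biUnion.2 ⟨t₁, mem_univ _, by simp [g, ht₁, hij.symm]⟩
  by_cases hjU : j ∉ univ.biUnion f
  · exact (card_le_card_of_forall_mem_of_ne hfg hjg hjU).trans (h g hg)
  by_cases hig : i ∈ univ.biUnion g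
  · exact (card_le_card fun x hx => if hxi : x = i then hxi ▸ hig else hfg x hx hxi).trans
      (h g hg)
  -- the member containing `j` misses `i`, so it is compressible too, and compressing it covers `i`
  obtain ⟨t₀, -, hjt₀⟩ := mem_biUnion.1 (not_not.1 hjU)
  have ht₀ : f t₀ ∈ 𝒜 := by
    by_contra ht₀
    exact disjoint_singleton_left.1 (UV.disjoint_of_mem_compression_of_notMem (hf t₀) ht₀) hjt₀
  have hit₀ : i ∉ f t₀ := fun hi => hig (mem_biUnion.2 ⟨t₀, mem_univ _, by simp [g, ht₀, hi]⟩)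
  have ht₁₀ : t₁ ≠ t₀ := by rintro rfl; exact ht₁ ht₀
  set g' := Function.update g t₀ ((f t₀ ∪ {i}) \ {j})
  have hg' : ∀ t, g' t ∈ 𝒜 := fun t => by
    rcases eq_or_ne t t₀ with rfl | ht
    · simpa [g'] using UV.sup_sdiff_mem_of_mem_compression (hf t) (by simpa) (by simpa)
    · simpa [g', ht] using hg t
  refine (card_le_card fun x hx => ?_).trans (h g' hg')
  rw [mem_biUnion]
  by_cases hxi : x = i
  · exact ⟨t₀, mem_univ _, by simp [g', hxi, hij]⟩
  by_cases hxj : x = j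
  · exact ⟨t₁, mem_univ _, by simp [g', ht₁₀, g, ht₁, hxj, hij.symm]⟩
  obtain ⟨t, -, hxt⟩ := mem_biUnion.1 (hfg x hx hxi)
  rcases eq_or_ne t t₀ with rfl | ht
  · exact ⟨t, mem_univ _, by simp [g', hxj, show x ∈ f t by simpa [g, ht₀] using hxt]⟩
  · exact ⟨t, mem_univ _, by simpa [g', ht] using hxt⟩

theorem Set.Sized.memberSubfamily {𝒜 : Finset (Finset α)} {k : ℕ}
    (h𝒜 : (𝒜 : Set (Finset α)).Sized k) (a : α) :
    ((𝒜.memberSubfamily a : Finset (Finset α)) : Set (Finset α)).Sized (k - 1) := fun A hA => by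
  obtain ⟨hA, haA⟩ := mem_memberSubfamily.1 hA
  have := h𝒜 hA
  rw [card_insert_of_notMem haA] at this
  omega

theorem card_shadow_iterate_memberSubfamily_add_card_shadow_iterate_nonMemberSubfamily_le
    (a : α) (𝒜 : Finset (Finset α)) (b : ℕ) :
    #(∂^[b] (𝒜.memberSubfamily a)) + #(∂^[b] (𝒜.nonMemberSubfamily a)) ≤ #(∂^[b] 𝒜) := by
  have hnot : ∀ G ∈ ∂^[b] (𝒜.memberSubfamily a), a ∉ G := fun G hG ha => by
    obtain ⟨A, hA, hGA, -⟩ := mem_shadow_iterate_iff_exists_mem_card_add.1 hG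
    exact (mem_memberSubfamily.1 hA).2 (hGA ha)
  rw [← card_image_of_injOn (s := ∂^[b] (𝒜.memberSubfamily a)) (f := insert a)
    fun G hG G' hG' hGG' => by rw [← erase_insert (hnot G hG), hGG', erase_insert (hnot G' hG')],
    ← card_union_of_disjoint]
  · refine card_le_card (union_subset (fun G' hG' => ?_) (shadow_monotone.iterate b
      fun A hA => (mem_nonMemberSubfamily.1 hA).1))
    obtain ⟨G, hG, rfl⟩ := mem_image.1 hG'
    obtain ⟨A, hA, hGA, hcard⟩ := mem_shadow_iterate_iff_exists_mem_card_add.1 hG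
    rw [mem_memberSubfamily] at hA
    refine mem_shadow_iterate_iff_exists_mem_card_add.2
      ⟨insert a A, hA.1, insert_subset_insert a hGA, ?_⟩
    rw [card_insert_of_notMem hA.2, card_insert_of_notMem (hnot G hG), hcard]
    ring
  · refine disjoint_left.2 fun G' hG' hG => ?_
    obtain ⟨G, -, rfl⟩ := mem_image.1 hG'
    obtain ⟨A, hA, hGA, -⟩ := mem_shadow_iterate_iff_exists_mem_card_add.1 hG
    exact (mem_nonMemberSubfamily.1 hA).2 (hGA (mem_insert_self a G))

end

def IsShifted (𝒜 : Finset (Finset ℕ)) : Prop :=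
  ∀ ⦃A⦄, A ∈ 𝒜 → ∀ ⦃i j⦄, i < j → j ∈ A → i ∉ A → insert i (A.erase j) ∈ 𝒜

theorem exists_compression_ne_of_not_isShifted {𝒜 : Finset (Finset ℕ)} (h : ¬ IsShifted 𝒜) :
    ∃ i j, i < j ∧ 𝓒 {i} {j} 𝒜 ≠ 𝒜 := by
  simp only [IsShifted, not_forall] at h
  obtain ⟨A, hA, i, j, hij, hjA, hiA, hshift⟩ := h
  refine ⟨i, j, hij, fun hc => hshift ?_⟩
  have hcomp := UV.compress_mem_compression (u := {i}) (v := {j}) hA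
  rwa [UV.compress_singleton hij.ne, if_pos ⟨hjA, hiA⟩, hc] at hcomp

def familySum (𝒜 : Finset (Finset ℕ)) : ℕ := ∑ A ∈ 𝒜, ∑ a ∈ A, a

theorem familySum_compression_lt {𝒜 : Finset (Finset ℕ)} {i j : ℕ} (hij : i < j)
    (h : 𝓒 {i} {j} 𝒜 ≠ 𝒜) : familySum (𝓒 {i} {j} 𝒜) < familySum 𝒜 := by
  rw [UV.compression] at h ⊢
  have hsplit := filter_union_filter_not_eq (fun A => UV.compress {i} {j} A ∈ 𝒜) 𝒜
  have hne : {A ∈ 𝒜 | UV.compress {i} {j} A ∉ 𝒜}.Nonempty := by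
    contrapose! h
    rw [filter_image, h, image_empty, union_empty]
    rwa [h, union_empty] at hsplit
  rw [familySum, familySum, sum_union UV.compress_disjoint]
  conv_rhs => rw [← hsplit]
  rw [sum_union (disjoint_filter_filter_not _ _ _), add_lt_add_iff_left, filter_image,
    sum_image UV.compress_injOn]
  refine sum_lt_sum_of_nonempty hne fun A hA => ?_
  rw [mem_filter] at hA
  have hmoved : j ∈ A ∧ i ∉ A := by
    by_contra hc
    rw [UV.compress_singleton hij.ne, if_neg hc] at hA
    exact hA.2 hA.1
  rw [UV.compress_singleton hij.ne, if_pos hmoved, sum_insert (by simp [hmoved.2]),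
    ← add_sum_erase A (fun a => a) hmoved.1]
  omega

theorem exists_isShifted {𝒜 : Finset (Finset ℕ)} {k s M : ℕ}
    (h𝒜 : (𝒜 : Set (Finset ℕ)).Sized k) (hU : UnionBounded s M 𝒜) :
    ∃ ℬ : Finset (Finset ℕ), (ℬ : Set (Finset ℕ)).Sized k ∧ UnionBounded s M ℬ ∧ IsShifted ℬ ∧
      #ℬ = #𝒜 ∧ ∀ b, #(∂^[b] ℬ) ≤ #(∂^[b] 𝒜) := by
  by_cases hsh : IsShifted 𝒜
  · exact ⟨𝒜, h𝒜, hU, hsh, rfl, fun _ => le_rfl⟩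
  obtain ⟨i, j, hij, hne⟩ := exists_compression_ne_of_not_isShifted hsh
  have := familySum_compression_lt hij hne
  obtain ⟨ℬ, hℬ, hℬU, hℬsh, hcard, hshadow⟩ :=
    exists_isShifted (h𝒜.uvCompression (by simp)) (hU.uvCompression hij.ne)
  refine ⟨ℬ, hℬ, hℬU, hℬsh, hcard.trans (UV.card_compression _ _ _), fun b => ?_⟩
  exact (hshadow b).trans <| (card_le_card (UV.shadow_iterate_compression_subset _ _ _ _)).trans
    (UV.card_compression _ _ _).le
termination_by familySum 𝒜

theorem IsShifted.insert_mem {𝒜 : Finset (Finset ℕ)} (h : IsShifted 𝒜) {A : Finset ℕ} {i j : ℕ}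
    (hij : i < j) (hA : insert j A ∈ 𝒜) (hjA : j ∉ A) (hiA : i ∉ A) : insert i A ∈ 𝒜 := by
  simpa [erase_insert hjA] using h hA hij (mem_insert_self j A) (by simp [hij.ne, hiA])

theorem subset_range_of_notMem {A : Finset ℕ} {m : ℕ} (hA : A ⊆ range (m + 1)) (hm : m ∉ A) :
    A ⊆ range m :=
  (subset_insert_iff_of_notMem hm).1 (range_add_one ▸ hA)

section Link
variable {𝒜 : Finset (Finset ℕ)} {m : ℕ}

theorem IsShifted.nonMemberSubfamily (h : IsShifted 𝒜) (h𝒜 : ∀ A ∈ 𝒜, A ⊆ range (m + 1)) :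
    IsShifted (𝒜.nonMemberSubfamily m) := by
  intro A hA i j hij hjA hiA
  rw [mem_nonMemberSubfamily] at hA ⊢
  have hjm := mem_range.1 (h𝒜 A hA.1 hjA)
  refine ⟨h hA.1 hij hjA hiA, ?_⟩
  simp only [mem_insert, mem_erase, hA.2, and_false, or_false]
  omega

theorem IsShifted.memberSubfamily (h : IsShifted 𝒜) (h𝒜 : ∀ A ∈ 𝒜, A ⊆ range (m + 1)) :
    IsShifted (𝒜.memberSubfamily m) := by
  intro A hA i j hij hjA hiA
  rw [mem_memberSubfamily] at hA ⊢
  have hjm : j < m :=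
    mem_range.1 (subset_range_of_notMem (insert_subset_iff.1 (h𝒜 _ hA.1)).2 hA.2 hjA)
  have hshift := h hA.1 hij (mem_insert_of_mem hjA) (by simp [hiA]; omega)
  rw [erase_insert_of_ne (by omega), insert_comm] at hshift
  exact ⟨hshift, by simp [hA.2]; omega⟩

theorem subset_range_of_mem_memberSubfamily (h𝒜 : ∀ A ∈ 𝒜, A ⊆ range (m + 1)) {A : Finset ℕ}
    (hA : A ∈ 𝒜.memberSubfamily m) : A ⊆ range m :=
  subset_range_of_notMem (insert_subset_iff.1 (h𝒜 _ (mem_memberSubfamily.1 hA).1)).2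
    (mem_memberSubfamily.1 hA).2

theorem subset_range_of_mem_nonMemberSubfamily (h𝒜 : ∀ A ∈ 𝒜, A ⊆ range (m + 1))
    {A : Finset ℕ} (hA : A ∈ 𝒜.nonMemberSubfamily m) : A ⊆ range m :=
  subset_range_of_notMem (h𝒜 _ (mem_nonMemberSubfamily.1 hA).1) (mem_nonMemberSubfamily.1 hA).2

theorem IsShifted.exists_cover (h : IsShifted 𝒜) {s : ℕ} {g : Fin s → Finset ℕ}
    (hg : ∀ t, g t ∈ 𝒜.memberSubfamily m) {W : Finset ℕ} (hW : W ⊆ range m \ univ.biUnion g)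
    (hWs : #W < s) :
    ∃ f : Fin s → Finset ℕ, (∀ t, f t ∈ 𝒜) ∧ univ.biUnion g ∪ W ∪ {m} ⊆ univ.biUnion f := by
  -- the first `#W` members trade `m` for the elements of `W`, the others keep `m`
  let f : Fin s → Finset ℕ := fun t =>
    if ht : (t : ℕ) < #W then insert (W.equivFin.symm ⟨t, ht⟩ : ℕ) (g t) else insert m (g t)
  refine ⟨f, fun t => ?_, fun x hx => ?_⟩
  · obtain ⟨hm, hmg⟩ := mem_memberSubfamily.1 (hg t)
    by_cases ht : (t : ℕ) < #W
    · have hw := hW (W.equivFin.symm ⟨t, ht⟩).2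
      simp only [mem_sdiff, mem_range, mem_biUnion, mem_univ, true_and, not_exists] at hw
      simpa [f, ht] using h.insert_mem hw.1 hm hmg (hw.2 t)
    · simpa [f, ht] using hm
  rw [mem_biUnion]
  simp only [mem_union, mem_singleton] at hx
  rcases hx with (hx | hx) | rfl
  · obtain ⟨t, -, hxt⟩ := mem_biUnion.1 hx
    refine ⟨t, mem_univ _, ?_⟩
    by_cases ht : (t : ℕ) < #W <;> simp [f, ht, hxt]
  · have ht : ((W.equivFin ⟨x, hx⟩ : ℕ)) < #W := (W.equivFin ⟨x, hx⟩).2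
    exact ⟨Fin.castLE hWs.le (W.equivFin ⟨x, hx⟩), mem_univ _, by simp [f, ht]⟩
  · exact ⟨⟨s - 1, by omega⟩, mem_univ _, by simp [f, show ¬ s - 1 < #W by omega]⟩

theorem IsShifted.card_biUnion_add_le {s M : ℕ} (h : IsShifted 𝒜) (hU : UnionBounded s M 𝒜)
    (hs : 1 ≤ s) (h𝒜 : ∀ A ∈ 𝒜, A ⊆ range (m + 1)) (hM : M ≤ m) {g : Fin s → Finset ℕ}
    (hg : ∀ t, g t ∈ 𝒜.memberSubfamily m) : #(univ.biUnion g) + s ≤ M := by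
  set U := univ.biUnion g with hU_def
  have hUm : U ⊆ range m :=
    biUnion_subset.2 fun t _ => subset_range_of_mem_memberSubfamily h𝒜 (hg t)
  obtain ⟨W, hWV, hW⟩ := exists_subset_card_eq (min_le_right (s - 1) #(range m \ U))
  obtain ⟨f, hf, hcover⟩ := h.exists_cover hg hWV (by omega)
  have hmW : m ∉ U ∪ W := fun hm => by
    have := mem_range.1 ((union_subset hUm fun x hx => (mem_sdiff.1 (hWV hx)).1) hm)
    omega
  have hcard : #(U ∪ W ∪ {m}) = #U + #W + 1 := by
    rw [card_union_of_disjoint (disjoint_singleton_right.2 hmW), card_singleton,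
      card_union_of_disjoint (disjoint_right.2 fun x hx => (mem_sdiff.1 (hWV hx)).2)]
  have hV : #(range m \ U) = m - #U := by rw [card_sdiff_of_subset hUm, card_range]
  have hUm' : #U ≤ m := card_range m ▸ card_le_card hUm
  have := (card_le_card hcover).trans (hU f hf)
  rw [← hU_def, hcard] at this
  omega

end Link

theorem IsShifted.card_le_pow_mul_card_shadow_iterate {n k s b : ℕ} {𝒜 : Finset (Finset ℕ)}
    (h : IsShifted 𝒜) (hs : 2 ≤ s) (hb : 1 ≤ b) (hbk : b ≤ k)
    (h𝒜 : (𝒜 : Set (Finset ℕ)).Sized k) (hn : ∀ A ∈ 𝒜, A ⊆ range n)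
    (hU : UnionBounded s ((s - 1) * (k - b + 1) + (k - 1)) 𝒜) :
    #𝒜 ≤ (s - 1) ^ b * #(∂^[b] 𝒜) := by
  induction n generalizing k 𝒜 with
  | zero => exact card_le_pow_mul_card_shadow_iterate_of_card_le h𝒜 hn (by omega) hb hbk (by simp)
  | succ m ih =>
    by_cases hsmall : m + 1 ≤ (s - 1) * (k - b + 1) + (k - 1)
    · exact card_le_pow_mul_card_shadow_iterate_of_card_le h𝒜 hn (by omega) hb hbk
        (by simpa using hsmall)
    have h₀ : #(𝒜.nonMemberSubfamily m) ≤ (s - 1) ^ b * #(∂^[b] (𝒜.nonMemberSubfamily m)) :=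
      ih (h.nonMemberSubfamily hn) hbk (h𝒜.mono fun A hA => (mem_nonMemberSubfamily.1 hA).1)
        (fun A hA => subset_range_of_mem_nonMemberSubfamily hn hA)
        (hU.mono fun A hA => (mem_nonMemberSubfamily.1 hA).1)
    have h₁ : #(𝒜.memberSubfamily m) ≤ (s - 1) ^ b * #(∂^[b] (𝒜.memberSubfamily m)) := by
      rcases (𝒜.memberSubfamily m).eq_empty_or_nonempty with h₁ | ⟨G, hG⟩
      · simp [h₁]
      have hlink := fun g hg => h.card_biUnion_add_le hU (by omega) hn (by omega) (g := g) hg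
      have hsized := h𝒜.memberSubfamily m
      -- a single link member repeated `s` times already forces `b < k`
      have hbk' : b < k := by
        have hG' : #G ≤ #(univ.biUnion fun _ : Fin s => G) :=
          card_le_card (subset_biUnion_of_mem (fun _ : Fin s => G) (mem_univ ⟨0, by omega⟩))
        have hrep := hlink (fun _ => G) fun _ => hG
        have hGk := hsized hG
        by_contra hkb
        rw [show k - b + 1 = 1 by omega, mul_one] at hrep
        omega
      refine ih (h.memberSubfamily hn) (by omega) hsized
        (fun A hA => subset_range_of_mem_memberSubfamily hn hA) fun g hg => ?_
      have hsplit : (s - 1) * (k - b + 1) = (s - 1) * (k - 1 - b + 1) + (s - 1) := by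
        rw [show k - b + 1 = k - 1 - b + 1 + 1 by omega, mul_add_one]
      have := hlink g hg
      omega
    calc #𝒜 = #(𝒜.memberSubfamily m) + #(𝒜.nonMemberSubfamily m) :=
          (card_memberSubfamily_add_card_nonMemberSubfamily m 𝒜).symm
      _ ≤ (s - 1) ^ b * (#(∂^[b] (𝒜.memberSubfamily m)) + #(∂^[b] (𝒜.nonMemberSubfamily m))) := by
          rw [mul_add]; exact add_le_add h₁ h₀
      _ ≤ (s - 1) ^ b * #(∂^[b] 𝒜) := Nat.mul_le_mul_left _
          (card_shadow_iterate_memberSubfamily_add_card_shadow_iterate_nonMemberSubfamily_le _ _ _)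

theorem card_le_pow_mul_card_shadow_iterate {k s b : ℕ} {𝒜 : Finset (Finset ℕ)} (hs : 2 ≤ s)
    (hb : 1 ≤ b) (hbk : b ≤ k) (h𝒜 : (𝒜 : Set (Finset ℕ)).Sized k)
    (hU : UnionBounded s ((s - 1) * (k - b + 1) + (k - 1)) 𝒜) :
    #𝒜 ≤ (s - 1) ^ b * #(∂^[b] 𝒜) := by
  obtain ⟨ℬ, hℬ, hℬU, hℬsh, hcard, hshadow⟩ := exists_isShifted h𝒜 hU
  obtain ⟨n, hn⟩ := exists_nat_subset_range (ℬ.sup id)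
  calc #𝒜 = #ℬ := hcard.symm
    _ ≤ (s - 1) ^ b * #(∂^[b] ℬ) := hℬsh.card_le_pow_mul_card_shadow_iterate hs hb hbk hℬ
        (fun A hA => (le_sup (f := id) hA).trans hn) hℬU
    _ ≤ (s - 1) ^ b * #(∂^[b] 𝒜) := Nat.mul_le_mul_left _ (hshadow b)

section Map
variable {α β : Type*} [DecidableEq α] [DecidableEq β] (e : α ↪ β)

theorem map_shadow (𝒜 : Finset (Finset α)) :
    (∂ 𝒜).map (mapEmbedding e).toEmbedding = ∂ (𝒜.map (mapEmbedding e).toEmbedding) := by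
  ext t
  simp only [mem_shadow_iff, mem_map, RelEmbedding.coe_toEmbedding, mapEmbedding_apply]
  constructor
  · rintro ⟨_, ⟨A, hA, a, ha, rfl⟩, rfl⟩
    exact ⟨A.map e, ⟨A, hA, rfl⟩, e a, mem_map_of_mem e ha, (map_erase e A a).symm⟩
  · rintro ⟨_, ⟨A, hA, rfl⟩, x, hx, rfl⟩
    obtain ⟨a, ha, rfl⟩ := mem_map.1 hx
    exact ⟨A.erase a, ⟨A, hA, a, ha, rfl⟩, map_erase e A a⟩

theorem map_shadow_iterate (b : ℕ) (𝒜 : Finset (Finset α)) :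
    (∂^[b] 𝒜).map (mapEmbedding e).toEmbedding = ∂^[b] (𝒜.map (mapEmbedding e).toEmbedding) :=
  Function.Semiconj.iterate_right (map_shadow e) b 𝒜

theorem UnionBounded.map {s M : ℕ} {𝒜 : Finset (Finset α)} (h : UnionBounded s M 𝒜) :
    UnionBounded s M (𝒜.map (mapEmbedding e).toEmbedding) := by
  intro f hf
  choose g hg hgf using fun t => mem_map.1 (hf t)
  have : univ.biUnion f = (univ.biUnion g).map e := by
    ext x
    simp only [mem_biUnion, mem_univ, true_and, ← hgf, RelEmbedding.coe_toEmbedding,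
      mapEmbedding_apply, mem_map]
    exact ⟨fun ⟨t, a, ha, hax⟩ => ⟨a, ⟨t, ha⟩, hax⟩, fun ⟨a, ⟨t, ha⟩, hax⟩ => ⟨t, a, ha, hax⟩⟩
  rw [this, card_map]
  exact h g hg

end Map

theorem shadow'_eq_shadow_iterate {n k b : ℕ} {F : Finset (Finset (Fin n))}
    (hF : ∀ A ∈ F, A.card = k) (hbk : b ≤ k) : shadow' n (k - b) F = ∂^[b] F := by
  ext G
  simp only [shadow', mem_filter, mem_univ, true_and, mem_shadow_iterate_iff_exists_mem_card_add]
  constructor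
  · rintro ⟨hG, A, hA, hGA⟩
    exact ⟨A, hA, hGA, by rw [hF A hA, hG]; omega⟩
  · rintro ⟨A, hA, hGA, hcard⟩
    exact ⟨by rw [hF A hA] at hcard; omega, A, hA, hGA⟩

theorem generalized_shadow_inequality_general (k s b n : ℕ)
    (hs : 2 ≤ s) (hb1 : 1 ≤ b) (hbk : b ≤ k)
    (F : Finset (Finset (Fin n))) (hF : ∀ A ∈ F, A.card = k)
    (hyp : ∀ f : Fin s → Finset (Fin n), (∀ i, f i ∈ F) →
      (Finset.univ.biUnion f).card ≤ k * s - (b - 1) * (s - 1) - 1) :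
    F.card ≤ (s - 1) ^ b * (shadow' n (k - b) F).card := by
  have hM : k * s - (b - 1) * (s - 1) - 1 = (s - 1) * (k - b + 1) + (k - 1) := by
    have hsum : (s - 1) * (k - b + 1) + (k - 1) + (b - 1) * (s - 1) + 1 = k * s := by
      zify [hbk, (by omega : 1 ≤ s), (by omega : 1 ≤ k), hb1]
      ring
    omega
  let e := (mapEmbedding (Fin.valEmbedding (n := n))).toEmbedding
  have hF' : ((F.map e : Finset (Finset ℕ)) : Set (Finset ℕ)).Sized k := by
    intro A' hA'
    obtain ⟨A, hA, rfl⟩ := mem_map.1 hA'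
    simpa [e] using hF A hA
  have hU : UnionBounded s _ (F.map e) := UnionBounded.map Fin.valEmbedding hyp
  rw [hM] at hU
  have := card_le_pow_mul_card_shadow_iterate hs hb1 hbk hF' hU
  rwa [card_map, ← map_shadow_iterate, card_map, ← shadow'_eq_shadow_iterate hF hbk] at this

/-- **Generalised Frankl shadow inequality.** Let `k ≥ 1`, `s ≥ 2`, `1 ≤ b ≤ k`.
If `F` is a family of `k`-subsets of `[n]` such that every choice of `s` members
(not necessarily distinct) `F₁, …, F_s ∈ F` satisfies
`|F₁ ∪ ⋯ ∪ F_s| ≤ k s - (b - 1)(s - 1) - 1`, then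
`(s - 1)^b · |σ_{k-b}(F)| ≥ |F|`. -/
theorem generalized_shadow_inequality (k s b n : ℕ)
    (hk : 1 ≤ k) (hs : 2 ≤ s) (hb1 : 1 ≤ b) (hbk : b ≤ k) (hn : 0 < n)
    (F : Finset (Finset (Fin n))) (hF : ∀ A ∈ F, A.card = k)
    (hyp : ∀ f : Fin s → Finset (Fin n), (∀ i, f i ∈ F) →
      (Finset.univ.biUnion f).card ≤ k * s - (b - 1) * (s - 1) - 1) :
    F.card ≤ (s - 1) ^ b * (shadow' n (k - b) F).card :=
  generalized_shadow_inequality_general k s b n hs hb1 hbk F hF hyp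
end

section
/- Let k ≥ 1 and s ≥ 2 be integers and let F be a family of k-element subsets of [n] which does not contain s pairwise disjoint sets. Then (s−1) · |σ_{k−1}(F)| ≥ |F|. -/
open scoped Classical

/-!
The compressions `𝓒 {i} {j}` with `i < j` keep the size of `F`, do not enlarge its shadow and do
not create `s` pairwise disjoint members, so we may assume that `F` is shifted, with ground set
`{0, …, n - 1}`. We then induct on `n`. If `n < s k`, the local LYM inequality
`k |F| ≤ (n - k + 1) |∂F|` already gives the bound. Otherwise split `F` along the last point
`n - 1`: the members avoiding it and the links `A \ {n - 1}` of the members containing it are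
again shifted and have no `s` pairwise disjoint members (for the links, `s` disjoint links leave
at least `s` free points, and shiftedness lets each link be completed by its own free point),
while their shadows sit in disjoint parts of `∂F`.
-/

open Finset UV
open scoped FinsetFamily

namespace Finset

section Matching

variable {α β : Type*} {s : ℕ} {F : Finset (Finset α)}

def HasMatching (s : ℕ) (F : Finset (Finset α)) : Prop :=
  ∃ M ⊆ F, #M = s ∧ (M : Set (Finset α)).Pairwise Disjoint

lemma HasMatching.mono {G : Finset (Finset α)} (h : HasMatching s F) (hFG : F ⊆ G) :
    HasMatching s G :=
  let ⟨M, hMF, hM⟩ := h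
  ⟨M, hMF.trans hFG, hM⟩

lemma pairwise_disjoint_map_mapEmbedding_iff [DecidableEq β] (f : α ↪ β) {M : Finset (Finset α)} :
    (M.map (mapEmbedding f).toEmbedding : Set (Finset β)).Pairwise Disjoint ↔
      (M : Set (Finset α)).Pairwise Disjoint := by
  have h : Function.onFun Disjoint (mapEmbedding f) = Disjoint := by
    ext A B
    simp [Function.onFun]
  rw [coe_map, Set.InjOn.pairwise_image (mapEmbedding f).toEmbedding.injective.injOn]
  exact iff_of_eq (congrArg _ h)

lemma hasMatching_map_mapEmbedding_iff [DecidableEq β] (f : α ↪ β) :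
    HasMatching s (F.map (mapEmbedding f).toEmbedding) ↔ HasMatching s F := by
  constructor
  · rintro ⟨M', hM'F, hM's, hM'⟩
    obtain ⟨M, hMF, rfl⟩ := subset_map_iff.1 hM'F
    exact ⟨M, hMF, by simpa using hM's, (pairwise_disjoint_map_mapEmbedding_iff f).1 hM'⟩
  · rintro ⟨M, hMF, hMs, hM⟩
    exact ⟨_, map_subset_map.2 hMF, by simpa using hMs,
      (pairwise_disjoint_map_mapEmbedding_iff f).2 hM⟩

lemma card_lt_of_sized_one_of_not_hasMatching (hF : (F : Set (Finset α)).Sized 1)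
    (h : ¬ HasMatching s F) : #F < s := by
  by_contra! hsF
  obtain ⟨M, hMF, hMs⟩ := exists_subset_card_eq hsF
  refine h ⟨M, hMF, hMs, fun A hA B hB hAB => ?_⟩
  obtain ⟨a, rfl⟩ := card_eq_one.1 (hF (hMF hA))
  obtain ⟨b, rfl⟩ := card_eq_one.1 (hF (hMF hB))
  exact disjoint_singleton.2 fun hab => hAB (hab ▸ rfl)

lemma hasMatching_of_forall_insert_mem [DecidableEq α] {M : Finset (Finset α)} {T : Finset α}
    (hM : (M : Set (Finset α)).Pairwise Disjoint) (hMT : #M ≤ #T)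
    (hTM : ∀ B ∈ M, Disjoint T B) (hF : ∀ B ∈ M, ∀ t ∈ T, insert t B ∈ F) :
    HasMatching #M F := by
  obtain ⟨e⟩ : Nonempty (M ↪ T) := Function.Embedding.nonempty_of_card_le (by simpa using hMT)
  let g : M → Finset α := fun B => insert (e B : α) B
  have hg : Pairwise (Function.onFun Disjoint g) := by
    intro B C hBC
    have hne : (e B : α) ≠ e C := fun h => hBC (e.injective (Subtype.ext h))
    have hBC' := hM B.2 C.2 (Subtype.coe_injective.ne hBC)
    simp only [g, Function.onFun, disjoint_insert_left, disjoint_insert_right, mem_insert,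
      not_or]
    exact ⟨⟨hne.symm, disjoint_left.1 (hTM B B.2) (e C).2⟩,
      disjoint_left.1 (hTM C C.2) (e B).2, hBC'⟩
  have hg_inj : Function.Injective g := fun B C hBC => by
    by_contra hne
    have := hg hne
    rw [Function.onFun, hBC, disjoint_self] at this
    exact insert_ne_empty _ _ this
  refine ⟨univ.image g, ?_, ?_, ?_⟩
  · exact image_subset_iff.2 fun B _ => hF B B.2 _ (e B).2
  · rw [card_image_of_injective _ hg_inj, card_univ, Fintype.card_coe]
  · rw [coe_image, coe_univ, Set.image_univ]
    exact hg.range_pairwise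

end Matching

section Shadow

variable {α β : Type*} [DecidableEq α] [DecidableEq β]

lemma shadow_map_mapEmbedding (f : α ↪ β) (𝒜 : Finset (Finset α)) :
    ∂ (𝒜.map (mapEmbedding f).toEmbedding) = (∂ 𝒜).map (mapEmbedding f).toEmbedding := by
  ext t
  simp only [mem_shadow_iff, mem_map, RelEmbedding.coe_toEmbedding, mapEmbedding_apply]
  constructor
  · rintro ⟨_, ⟨s, hs, rfl⟩, _, hb, rfl⟩
    obtain ⟨a, ha, rfl⟩ := mem_map.1 hb
    exact ⟨s.erase a, ⟨s, hs, a, ha, rfl⟩, map_erase f s a⟩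
  · rintro ⟨_, ⟨s, hs, a, ha, rfl⟩, rfl⟩
    exact ⟨s.map f, ⟨s, hs, rfl⟩, f a, mem_map_of_mem f ha, (map_erase f s a).symm⟩

lemma card_mul_le_card_shadow_mul_of_forall_subset {𝒜 : Finset (Finset α)} {U : Finset α}
    {r : ℕ} (h𝒜 : (𝒜 : Set (Finset α)).Sized r) (hU : ∀ A ∈ 𝒜, A ⊆ U) :
    #𝒜 * r ≤ #(∂ 𝒜) * (#U - r + 1) := by
  let e := (mapEmbedding (Function.Embedding.subtype (· ∈ U))).toEmbedding
  obtain ⟨ℬ, -, rfl⟩ : ∃ ℬ ⊆ univ, 𝒜 = ℬ.map e := by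
    refine subset_map_iff.1 fun A hA => mem_map.2 ⟨A.subtype (· ∈ U), mem_univ _, ?_⟩
    exact subtype_map_of_mem (hU A hA)
  have hℬ : (ℬ : Set (Finset U)).Sized r := fun B hB => by
    simpa [e] using h𝒜 (mem_map_of_mem e hB)
  rw [shadow_map_mapEmbedding, card_map, card_map, ← Fintype.card_coe U]
  exact card_mul_le_card_shadow_mul hℬ

lemma shadow_memberSubfamily_subset (a : α) (𝒜 : Finset (Finset α)) :
    ∂ (𝒜.memberSubfamily a) ⊆ (∂ 𝒜).memberSubfamily a := by
  intro t ht
  obtain ⟨s, hs, x, hx, rfl⟩ := mem_shadow_iff.1 ht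
  rw [mem_memberSubfamily] at hs ⊢
  have hax : a ≠ x := fun h => hs.2 (h ▸ hx)
  refine ⟨?_, fun h => hs.2 (mem_of_mem_erase h)⟩
  rw [← erase_insert_of_ne hax]
  exact erase_mem_shadow hs.1 (mem_insert_of_mem hx)

lemma shadow_nonMemberSubfamily_subset (a : α) (𝒜 : Finset (Finset α)) :
    ∂ (𝒜.nonMemberSubfamily a) ⊆ (∂ 𝒜).nonMemberSubfamily a := by
  intro t ht
  obtain ⟨s, hs, x, hx, rfl⟩ := mem_shadow_iff.1 ht
  rw [mem_nonMemberSubfamily] at hs ⊢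
  exact ⟨erase_mem_shadow hs.1 hx, fun h => hs.2 (mem_of_mem_erase h)⟩

lemma card_shadow_memberSubfamily_add_card_shadow_nonMemberSubfamily_le (a : α)
    (𝒜 : Finset (Finset α)) :
    #(∂ (𝒜.memberSubfamily a)) + #(∂ (𝒜.nonMemberSubfamily a)) ≤ #(∂ 𝒜) := by
  rw [← card_memberSubfamily_add_card_nonMemberSubfamily a (∂ 𝒜)]
  exact add_le_add (card_le_card (shadow_memberSubfamily_subset a 𝒜))
    (card_le_card (shadow_nonMemberSubfamily_subset a 𝒜))

lemma sized_memberSubfamily {F : Finset (Finset α)} {k : ℕ} (a : α)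
    (hF : (F : Set (Finset α)).Sized k) :
    (F.memberSubfamily a : Set (Finset α)).Sized (k - 1) := fun B hB => by
  obtain ⟨hB, haB⟩ := mem_memberSubfamily.1 hB
  have := hF hB
  rw [card_insert_of_notMem haB] at this
  omega

end Shadow

section Shifting

variable {α : Type*}

def IsShifted [LinearOrder α] (F : Finset (Finset α)) : Prop :=
  ∀ ⦃i j : α⦄ ⦃A : Finset α⦄, i < j → A ∈ F → j ∈ A → i ∉ A → insert i (A.erase j) ∈ F

lemma IsShifted.insert_mem [LinearOrder α] {F : Finset (Finset α)}
    (hF : IsShifted F) {B : Finset α} {t m : α} (hB : insert m B ∈ F) (hmB : m ∉ B)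
    (htm : t ≤ m) (htB : t ∉ B) : insert t B ∈ F := by
  obtain rfl | htm := htm.eq_or_lt
  · exact hB
  have := hF htm hB (mem_insert_self m B) (by simp [htm.ne, htB])
  rwa [erase_insert hmB] at this

lemma compress_singleton_singleton [DecidableEq α] {i j : α} {A : Finset α} (hi : i ∉ A)
    (hj : j ∈ A) : compress {i} {j} A = insert i (A.erase j) := by
  rw [compress_of_disjoint_of_le (disjoint_singleton_left.2 hi) (singleton_subset_iff.2 hj),
    sup_eq_union, union_singleton, sdiff_singleton_eq_erase,
    erase_insert_of_ne (ne_of_mem_of_not_mem hj hi).symm]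

lemma map_swap_of_notMem_of_mem [DecidableEq α] {i j : α} {A : Finset α} (hi : i ∉ A)
    (hj : j ∈ A) : A.map (Equiv.swap i j).toEmbedding = insert i (A.erase j) := by
  ext x
  rw [mem_map_equiv, Equiv.symm_swap, Equiv.swap_apply_def, mem_insert, mem_erase]
  grind

lemma map_swap_of_notMem_of_notMem [DecidableEq α] {i j : α} {A : Finset α} (hi : i ∉ A)
    (hj : j ∉ A) : A.map (Equiv.swap i j).toEmbedding = A := by
  ext x
  rw [mem_map_equiv, Equiv.symm_swap, Equiv.swap_apply_def]
  grind

/-- A matching in a compressed family is moved back into the family by the transposition `(i j)`,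
since at most one of its members contains `i`. -/
lemma HasMatching.of_compression [DecidableEq α] {s : ℕ} {i j : α} {F : Finset (Finset α)}
    (h : HasMatching s (𝓒 {i} {j} F)) : HasMatching s F := by
  obtain ⟨M, hMC, rfl, hM⟩ := h
  by_cases hMF : M ⊆ F
  · exact ⟨M, hMF, rfl, hM⟩
  obtain ⟨A, hAM, hAF⟩ := not_subset.1 hMF
  have hiA : i ∈ A := singleton_subset_iff.1 (le_of_mem_compression_of_notMem (hMC hAM) hAF)
  have hjA : j ∉ A :=
    disjoint_singleton_left.1 (disjoint_of_mem_compression_of_notMem (hMC hAM) hAF)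
  have hiB : ∀ B ∈ M, B ≠ A → i ∉ B := fun B hB hBA hiB =>
    disjoint_left.1 (hM hB hAM hBA) hiB hiA
  suffices hswap : ∀ B ∈ M, B.map (Equiv.swap i j).toEmbedding ∈ F by
    refine ((hasMatching_map_mapEmbedding_iff (Equiv.swap i j).toEmbedding).2
      ⟨M, subset_rfl, rfl, hM⟩).mono fun X hX => ?_
    obtain ⟨B, hB, rfl⟩ := mem_map.1 hX
    exact hswap B hB
  intro B hB
  by_cases hBA : B = A
  · subst hBA
    rw [Equiv.swap_comm, map_swap_of_notMem_of_mem hjA hiA, ← compress_singleton_singleton hjA hiA,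
      compress_of_disjoint_of_le (disjoint_singleton_left.2 hjA) (singleton_subset_iff.2 hiA)]
    exact sup_sdiff_mem_of_mem_compression_of_notMem (hMC hAM) hAF
  have hBF : B ∈ F := by
    by_contra hBF
    exact hiB B hB hBA (singleton_subset_iff.1 (le_of_mem_compression_of_notMem (hMC hB) hBF))
  by_cases hjB : j ∈ B
  · rw [map_swap_of_notMem_of_mem (hiB B hB hBA) hjB,
      ← compress_singleton_singleton (hiB B hB hBA) hjB]
    rcases mem_compression.1 (hMC hB) with ⟨-, h⟩ | ⟨h, -⟩
    exacts [h, absurd hBF h]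
  · rwa [map_swap_of_notMem_of_notMem (hiB B hB hBA) hjB]

def familyMeasure (F : Finset (Finset ℕ)) : ℕ := ∑ A ∈ F, ∑ a ∈ A, 2 ^ a

lemma familyMeasure_compression_lt {U V : Finset ℕ} {hU : U.Nonempty} {hV : V.Nonempty}
    (h : U.max' hU < V.max' hV) {F : Finset (Finset ℕ)} (hF : 𝓒 U V F ≠ F) :
    familyMeasure (𝓒 U V F) < familyMeasure F := by
  rw [compression] at hF ⊢
  have hmoved : {A ∈ F | compress U V A ∉ F}.Nonempty := by
    contrapose! hF
    rw [filter_image, hF, image_empty, union_empty, filter_true_of_mem]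
    simpa [filter_eq_empty_iff] using hF
  rw [familyMeasure, familyMeasure, sum_union compress_disjoint]
  conv_rhs => rw [← filter_union_filter_not_eq (fun A => compress U V A ∈ F) F]
  rw [sum_union (disjoint_filter_filter_not _ _ _), add_lt_add_iff_left, filter_image,
    sum_image compress_injOn]
  refine sum_lt_sum_of_nonempty hmoved fun A hA => ?_
  rw [geomSum_lt_geomSum_iff_toColex_lt_toColex le_rfl]
  rw [mem_filter] at hA
  exact toColex_compress_lt_toColex h fun hA' => hA.2 (by rw [hA']; exact hA.1)

theorem exists_isShifted (P : Finset (Finset ℕ) → Prop)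
    (hP : ∀ ⦃i j : ℕ⦄ ⦃F : Finset (Finset ℕ)⦄, i < j → P F → P (𝓒 {i} {j} F))
    (F : Finset (Finset ℕ)) (hF : P F) :
    ∃ G, P G ∧ IsShifted G ∧ #G = #F ∧ #(∂ G) ≤ #(∂ F) := by
  by_cases hsh : IsShifted F
  · exact ⟨F, hF, hsh, rfl, le_rfl⟩
  obtain ⟨i, j, A, hij, hAF, hjA, hiA, hA⟩ : ∃ i j A, i < j ∧ A ∈ F ∧ j ∈ A ∧ i ∉ A ∧
      insert i (A.erase j) ∉ F := by
    simpa [IsShifted] using hsh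
  have hC : 𝓒 {i} {j} F ≠ F := fun hC => by
    have hAC := hC ▸ hAF
    rcases mem_compression.1 hAC with ⟨-, h⟩ | ⟨h, -⟩
    · exact hA (compress_singleton_singleton hiA hjA ▸ h)
    · exact h hAF
  have := familyMeasure_compression_lt (hU := singleton_nonempty i) (hV := singleton_nonempty j)
    (by simpa using hij) hC
  obtain ⟨G, hG, hGsh, hGcard, hGshadow⟩ := exists_isShifted P hP _ (hP hij hF)
  refine ⟨G, hG, hGsh, hGcard.trans (card_compression _ _ _),
    hGshadow.trans (card_shadow_compression_le _ _ ?_)⟩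
  simp [isCompressed_self]
termination_by familyMeasure F

end Shifting

section GroundSet

variable {F : Finset (Finset ℕ)} {n k s : ℕ}

lemma subset_range_of_subset_range_add_one {A : Finset ℕ} (hA : A ⊆ range (n + 1))
    (hn : n ∉ A) : A ⊆ range n :=
  (subset_insert_iff_of_notMem hn).1 (range_add_one ▸ hA)

lemma forall_subset_range_compression {i j : ℕ} (hij : i < j) (hF : ∀ A ∈ F, A ⊆ range n) :
    ∀ A ∈ 𝓒 {i} {j} F, A ⊆ range n := by
  intro A hA
  rcases mem_compression.1 hA with ⟨hAF, -⟩ | ⟨-, B, hB, rfl⟩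
  · exact hF A hAF
  by_cases h : i ∉ B ∧ j ∈ B
  · have hjn := mem_range.1 (hF B hB h.2)
    rw [compress_singleton_singleton h.1 h.2]
    exact insert_subset (mem_range.2 (by omega)) ((erase_subset _ _).trans (hF B hB))
  · rw [compress, if_neg (by simpa using h)]
    exact hF B hB

lemma forall_subset_range_memberSubfamily (hF : ∀ A ∈ F, A ⊆ range (n + 1)) :
    ∀ B ∈ F.memberSubfamily n, B ⊆ range n := fun B hB => by
  obtain ⟨hB, hnB⟩ := mem_memberSubfamily.1 hB
  exact subset_range_of_subset_range_add_one ((subset_insert _ _).trans (hF _ hB)) hnB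

lemma forall_subset_range_nonMemberSubfamily (hF : ∀ A ∈ F, A ⊆ range (n + 1)) :
    ∀ A ∈ F.nonMemberSubfamily n, A ⊆ range n := fun A hA => by
  obtain ⟨hA, hnA⟩ := mem_nonMemberSubfamily.1 hA
  exact subset_range_of_subset_range_add_one (hF A hA) hnA

lemma IsShifted.nonMemberSubfamily (hF : IsShifted F) (hFn : ∀ A ∈ F, A ⊆ range (n + 1)) :
    IsShifted (F.nonMemberSubfamily n) := by
  intro i j A hij hA hjA hiA
  rw [mem_nonMemberSubfamily] at hA ⊢
  have hjn := mem_range.1 (hFn A hA.1 hjA)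
  refine ⟨hF hij hA.1 hjA hiA, ?_⟩
  simp only [mem_insert, mem_erase, not_or, not_and]
  exact ⟨by omega, fun _ => hA.2⟩

lemma IsShifted.memberSubfamily (hF : IsShifted F) (hFn : ∀ A ∈ F, A ⊆ range (n + 1)) :
    IsShifted (F.memberSubfamily n) := by
  intro i j B hij hB hjB hiB
  have hjn := mem_range.1 (forall_subset_range_memberSubfamily hFn B hB hjB)
  rw [mem_memberSubfamily] at hB ⊢
  have := hF hij hB.1 (mem_insert_of_mem hjB) (by simp [hiB]; omega)
  rw [erase_insert_of_ne (by omega), insert_comm] at this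
  refine ⟨this, ?_⟩
  simp only [mem_insert, mem_erase, not_or, not_and]
  exact ⟨by omega, fun _ => hB.2⟩

/-- A matching of `s` links of size `r` misses at least `s` points of `[0, n]`, and by
shiftedness each of them may replace `n`. -/
lemma IsShifted.not_hasMatching_memberSubfamily (hF : IsShifted F) {r : ℕ}
    (hr : (F.memberSubfamily n : Set (Finset ℕ)).Sized r) (hsr : s * (r + 1) ≤ n + 1)
    (h : ¬ HasMatching s F) : ¬ HasMatching s (F.memberSubfamily n) := by
  rintro ⟨M, hMF, rfl, hM⟩
  have hU : #(M.biUnion id) = #M * r :=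
    (card_biUnion (t := id) hM).trans (sum_const_nat fun B hB => hr (hMF hB))
  have hT : #M ≤ #(range (n + 1) \ M.biUnion id) := by
    have := le_card_sdiff (M.biUnion id) (range (n + 1))
    rw [card_range, hU] at this
    rw [mul_add_one] at hsr
    omega
  refine h (hasMatching_of_forall_insert_mem hM hT
    (fun B hB => disjoint_sdiff_self_left.mono_right (subset_biUnion_of_mem id hB))
    fun B hB t ht => ?_)
  obtain ⟨htn, htU⟩ := mem_sdiff.1 ht
  obtain ⟨hB', hnB⟩ := mem_memberSubfamily.1 (hMF hB)
  exact hF.insert_mem hB' hnB (Nat.lt_succ_iff.1 (mem_range.1 htn))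
    fun htB => htU (mem_biUnion.2 ⟨B, hB, htB⟩)

lemma card_le_mul_card_shadow_of_lt_mul (hFk : (F : Set (Finset ℕ)).Sized k)
    (hFn : ∀ A ∈ F, A ⊆ range n) (hnsk : n < s * k) : #F ≤ (s - 1) * #(∂ F) := by
  obtain rfl | ⟨A, hA⟩ := F.eq_empty_or_nonempty
  · simp
  have hkn : k ≤ n := by simpa [hFk hA] using card_le_card (hFn A hA)
  have hk : 0 < k := Nat.pos_of_ne_zero (by rintro rfl; simp at hnsk)
  refine Nat.le_of_mul_le_mul_right ?_ hk
  calc #F * k ≤ #(∂ F) * (n - k + 1) := by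
        simpa using card_mul_le_card_shadow_mul_of_forall_subset hFk hFn
    _ ≤ #(∂ F) * ((s - 1) * k) := by
        gcongr
        rw [Nat.sub_one_mul]
        omega
    _ = (s - 1) * #(∂ F) * k := by ring

theorem IsShifted.card_le_mul_card_shadow (hF : IsShifted F) (hk : 1 ≤ k)
    (hFk : (F : Set (Finset ℕ)).Sized k) (hFn : ∀ A ∈ F, A ⊆ range n) (h : ¬ HasMatching s F) :
    #F ≤ (s - 1) * #(∂ F) := by
  induction n generalizing k F with
  | zero =>
    suffices F = ∅ by simp [this]
    refine eq_empty_of_forall_notMem fun A hA => ?_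
    have := hFk hA
    rw [show A = ∅ by simpa using hFn A hA, card_empty] at this
    omega
  | succ n ih =>
    by_cases hsk : s * k ≤ n + 1
    swap
    · exact card_le_mul_card_shadow_of_lt_mul hFk hFn (by omega)
    obtain rfl | hk := hk.eq_or_lt
    · obtain rfl | ⟨A, hA⟩ := F.eq_empty_or_nonempty
      · simp
      obtain ⟨a, ha⟩ := card_pos.1 (by rw [hFk hA]; omega)
      have hs := card_lt_of_sized_one_of_not_hasMatching hFk h
      calc #F ≤ s - 1 := by omega
        _ ≤ (s - 1) * #(∂ F) := Nat.le_mul_of_pos_right _ (card_pos.2 ⟨_, erase_mem_shadow hA ha⟩)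
    have hF1 := sized_memberSubfamily n hFk
    have h1 := ih (hF.memberSubfamily hFn) (by omega) hF1 (forall_subset_range_memberSubfamily hFn)
      (hF.not_hasMatching_memberSubfamily hF1 (by rwa [Nat.sub_add_cancel hk.le]) h)
    have h0 := ih (hF.nonMemberSubfamily hFn) hk.le
      (hFk.mono fun A hA => (mem_nonMemberSubfamily.1 hA).1)
      (forall_subset_range_nonMemberSubfamily hFn)
      fun h0 => h (h0.mono fun A hA => (mem_nonMemberSubfamily.1 hA).1)
    calc #F = #(F.memberSubfamily n) + #(F.nonMemberSubfamily n) :=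
          (card_memberSubfamily_add_card_nonMemberSubfamily n F).symm
      _ ≤ (s - 1) * (#(∂ (F.memberSubfamily n)) + #(∂ (F.nonMemberSubfamily n))) := by
          rw [mul_add]
          exact add_le_add h1 h0
      _ ≤ (s - 1) * #(∂ F) := Nat.mul_le_mul_left _
          (card_shadow_memberSubfamily_add_card_shadow_nonMemberSubfamily_le n F)

theorem card_le_mul_card_shadow (hk : 1 ≤ k) (hFk : (F : Set (Finset ℕ)).Sized k)
    (hFn : ∀ A ∈ F, A ⊆ range n) (h : ¬ HasMatching s F) : #F ≤ (s - 1) * #(∂ F) := by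
  obtain ⟨G, ⟨hGk, hGn, hG⟩, hGsh, hcard, hshadow⟩ := exists_isShifted
    (fun G => (G : Set (Finset ℕ)).Sized k ∧ (∀ A ∈ G, A ⊆ range n) ∧ ¬ HasMatching s G)
    (fun i j G hij ⟨hGk, hGn, hG⟩ => ⟨hGk.uvCompression rfl,
      forall_subset_range_compression hij hGn, fun h' => hG h'.of_compression⟩)
    F ⟨hFk, hFn, h⟩
  calc #F = #G := hcard.symm
    _ ≤ (s - 1) * #(∂ G) := hGsh.card_le_mul_card_shadow hk hGk hGn hG
    _ ≤ (s - 1) * #(∂ F) := Nat.mul_le_mul_left _ hshadow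

end GroundSet

end Finset

lemma shadow'_eq_shadow {n k : ℕ} {F : Finset (Finset (Fin n))} (hk : 1 ≤ k)
    (hF : (F : Set (Finset (Fin n))).Sized k) : shadow' n (k - 1) F = ∂ F := by
  ext G
  simp only [shadow', mem_filter, mem_univ, true_and, mem_shadow_iff_exists_mem_card_add_one]
  constructor
  · rintro ⟨hG, A, hA, hGA⟩
    exact ⟨A, hA, hGA, by rw [hF hA]; omega⟩
  · rintro ⟨A, hA, hGA, hcard⟩
    rw [hF hA] at hcard
    exact ⟨by omega, A, hA, hGA⟩

theorem frankl_shadow_inequality_general (k s n : ℕ) (hk : 1 ≤ k)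
    (F : Finset (Finset (Fin n))) (hF : ∀ A ∈ F, A.card = k)
    (hyp : ¬ ∃ M : Finset (Finset (Fin n)), M ⊆ F ∧ M.card = s ∧
      (∀ e ∈ M, ∀ f ∈ M, e ≠ f → Disjoint e f)) :
    F.card ≤ (s - 1) * (shadow' n (k - 1) F).card := by
  have hFk : (F : Set (Finset (Fin n))).Sized k := fun A hA => hF A hA
  let e := (mapEmbedding (Fin.valEmbedding (n := n))).toEmbedding
  rw [shadow'_eq_shadow hk hFk, ← card_map e, ← card_map e,
    ← shadow_map_mapEmbedding]
  refine card_le_mul_card_shadow (n := n) hk ?_ ?_ ?_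
  · intro A hA
    obtain ⟨B, hB, rfl⟩ := mem_map.1 hA
    simpa [e] using hFk hB
  · intro A hA
    obtain ⟨B, -, rfl⟩ := mem_map.1 hA
    simp [e, subset_iff]
  · rw [hasMatching_map_mapEmbedding_iff]
    exact fun ⟨M, hMF, hMs, hM⟩ => hyp ⟨M, hMF, hMs, fun A hA B hB => hM hA hB⟩

/-- **Frankl's shadow inequality.** If `k ≥ 1`, `s ≥ 2` and `F` is a family of
`k`-subsets of `[n]` containing no `s` pairwise disjoint sets, then
`(s - 1) · |σ_{k-1}(F)| ≥ |F|`. -/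
theorem frankl_shadow_inequality (k s n : ℕ) (hk : 1 ≤ k) (hs : 2 ≤ s)
    (F : Finset (Finset (Fin n))) (hF : ∀ A ∈ F, A.card = k)
    (hyp : ¬ ∃ M : Finset (Finset (Fin n)), M ⊆ F ∧ M.card = s ∧
      (∀ e ∈ M, ∀ f ∈ M, e ≠ f → Disjoint e f)) :
    F.card ≤ (s - 1) * (shadow' n (k - 1) F).card :=
  frankl_shadow_inequality_general k s n hk F hF hyp
end

section
/- Let ε ∈ (0,1), p ∈ [0,1], and let m ≥ 1 and r ≥ 2 be integers. Let G be an r-partite r-graph with parts V₁, ..., V_r, each of size m or m+1, which is (ε,p)-regular and satisfies d(V₁,...,V_r) > εp. Then G has a matching of size at least (1−ε)·m. -/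
open scoped Classical

/-- Density `d(X₁, …, X_r)` of the tuple `X` in the hypergraph `G`. -/
noncomputable def hyperDensity {α : Type*} [DecidableEq α] {r : ℕ}
    (G : Finset (Finset α)) (X : Fin r → Finset α) : ℝ :=
  ((G.filter fun e => ∀ i, (e ∩ X i).card = 1).card : ℝ) / ∏ i, ((X i).card : ℝ)

/-- The `r`-partite hypergraph `G` with parts `X₁, …, X_r` is `(ε, p)`-regular. -/
def IsRegularTuple {α : Type*} [DecidableEq α] {r : ℕ} (ε p : ℝ)
    (G : Finset (Finset α)) (X : Fin r → Finset α) : Prop :=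
  ∀ Y : Fin r → Finset α, (∀ i, Y i ⊆ X i) →
    (∀ i, ε * ((X i).card : ℝ) ≤ ((Y i).card : ℝ)) →
    |hyperDensity G Y - hyperDensity G X| ≤ ε * p

/-- **Matchings in regular tuples.** An `(ε, p)`-regular `r`-partite `r`-graph with
parts of size `m` or `m + 1` and density greater than `ε p` has a matching of size at
least `(1 - ε) m`. -/
theorem regular_tuple_matching {α : Type*} [Fintype α] [DecidableEq α]
    (ε p : ℝ) (hε0 : 0 < ε) (hε1 : ε < 1) (hp0 : 0 ≤ p) (hp1 : p ≤ 1)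
    (m r : ℕ) (hm : 1 ≤ m) (hr : 2 ≤ r)
    (V : Fin r → Finset α) (hdisj : ∀ i j, i ≠ j → Disjoint (V i) (V j))
    (hsize : ∀ i, (V i).card = m ∨ (V i).card = m + 1)
    (G : Finset (Finset α))
    (hpartite : ∀ e ∈ G, e.card = r ∧ ∀ i, (e ∩ V i).card = 1)
    (hreg : IsRegularTuple ε p G V)
    (hdens : ε * p < hyperDensity G V) :
    ∃ M : Finset (Finset α), M ⊆ G ∧
      (∀ e ∈ M, ∀ f ∈ M, e ≠ f → Disjoint e f) ∧
      (1 - ε) * (m : ℝ) ≤ (M.card : ℝ) := by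
  classical
  -- Matchings of G
  set P : Finset (Finset (Finset α)) :=
    G.powerset.filter (fun M => ∀ e ∈ M, ∀ f ∈ M, e ≠ f → Disjoint e f) with hP
  have hPne : P.Nonempty := ⟨∅, by simp [hP]⟩
  obtain ⟨M, hMP, hMmax⟩ := P.exists_max_image (fun M => M.card) hPne
  rw [hP, Finset.mem_filter, Finset.mem_powerset] at hMP
  obtain ⟨hMG, hMmatch⟩ := hMP
  refine ⟨M, hMG, hMmatch, ?_⟩
  by_contra hlt
  push_neg at hlt
  -- uncovered vertices
  set C : Finset α := M.biUnion id with hC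
  set Y : Fin r → Finset α := fun i => V i \ C with hYdef
  have hYsub : ∀ i, Y i ⊆ V i := fun i => Finset.sdiff_subset
  -- |V i ∩ C| ≤ M.card
  have hcov : ∀ i, (V i ∩ C).card ≤ M.card := by
    intro i
    have : V i ∩ C = M.biUnion (fun f => V i ∩ f) := by
      rw [hC, Finset.inter_biUnion]
      simp
    rw [this]
    calc (M.biUnion fun f => V i ∩ f).card ≤ ∑ f ∈ M, (V i ∩ f).card :=
          Finset.card_biUnion_le
      _ ≤ ∑ _f ∈ M, 1 := by
          refine Finset.sum_le_sum ?_
          intro f hf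
          have := (hpartite f (hMG hf)).2 i
          rw [Finset.inter_comm] at this
          exact this.le
      _ = M.card := by simp
  -- size of Y i
  have hYcard : ∀ i, ((V i).card : ℝ) - M.card ≤ (Y i).card := by
    intro i
    have h1 : (Y i).card + (V i ∩ C).card = (V i).card := by
      rw [hYdef]
      exact Finset.card_sdiff_add_card_inter _ _
    have h2 := hcov i
    have : ((Y i).card : ℝ) + (V i ∩ C).card = (V i).card := by exact_mod_cast h1
    have h2' : ((V i ∩ C).card : ℝ) ≤ M.card := by exact_mod_cast h2
    linarith
  have hYbig : ∀ i, ε * ((V i).card : ℝ) ≤ (Y i).card := by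
    intro i
    have := hYcard i
    rcases hsize i with h | h <;> rw [h] at this ⊢ <;> push_cast at this ⊢ <;> nlinarith
  -- regularity
  have habs := hreg Y hYsub hYbig
  have hdY : 0 < hyperDensity G Y := by
    have := abs_le.mp habs
    linarith [this.1]
  -- there is an edge in Y
  have hNne : (G.filter fun e => ∀ i, (e ∩ Y i).card = 1).Nonempty := by
    by_contra hne
    rw [Finset.not_nonempty_iff_eq_empty] at hne
    rw [hyperDensity, hne] at hdY
    simp at hdY
  obtain ⟨e, he⟩ := hNne
  rw [Finset.mem_filter] at he
  obtain ⟨heG, heY⟩ := he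
  obtain ⟨hecard, heV⟩ := hpartite e heG
  -- e ∩ Y i = e ∩ V i
  have hinter : ∀ i, e ∩ Y i = e ∩ V i := by
    intro i
    refine Finset.eq_of_subset_of_card_le
      (Finset.inter_subset_inter Finset.Subset.rfl (hYsub i)) ?_
    rw [heV i, heY i]
  -- e ⊆ union of the Y i
  have hesub : e ⊆ Finset.univ.biUnion (fun i => e ∩ Y i) := by
    have hdisj' : ∀ i ∈ (Finset.univ : Finset (Fin r)), ∀ j ∈ Finset.univ,
        i ≠ j → Disjoint (e ∩ Y i) (e ∩ Y j) := by
      intro i _ j _ hij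
      exact Finset.disjoint_of_subset_left Finset.inter_subset_right
        (Finset.disjoint_of_subset_right Finset.inter_subset_right
          (Finset.disjoint_of_subset_left (hYsub i)
            (Finset.disjoint_of_subset_right (hYsub j) (hdisj i j hij))))
    have hcard : (Finset.univ.biUnion (fun i => e ∩ Y i)).card = r := by
      rw [Finset.card_biUnion hdisj']
      simp [heY]
    have hsub : Finset.univ.biUnion (fun i => e ∩ Y i) ⊆ e := by
      intro v hv
      rw [Finset.mem_biUnion] at hv
      obtain ⟨i, _, hvi⟩ := hv
      exact (Finset.mem_inter.mp hvi).1
    have := Finset.eq_of_subset_of_card_le hsub (by rw [hcard, hecard])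
    rw [this]
  -- e avoids C
  have heC : ∀ v ∈ e, v ∉ C := by
    intro v hv
    have := hesub hv
    rw [Finset.mem_biUnion] at this
    obtain ⟨i, _, hvi⟩ := this
    have : v ∈ Y i := (Finset.mem_inter.mp hvi).2
    rw [hYdef] at this
    exact (Finset.mem_sdiff.mp this).2
  -- e disjoint from every f ∈ M
  have hedisj : ∀ f ∈ M, Disjoint e f := by
    intro f hf
    rw [Finset.disjoint_left]
    intro v hv hvf
    exact heC v hv (Finset.mem_biUnion.mpr ⟨f, hf, hvf⟩)
  have heM : e ∉ M := by
    intro h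
    have := hedisj e h
    rw [disjoint_self, Finset.bot_eq_empty] at this
    rw [this] at hecard
    simp at hecard
    omega
  -- bigger matching
  have hbig : insert e M ∈ P := by
    rw [hP, Finset.mem_filter, Finset.mem_powerset]
    constructor
    · exact Finset.insert_subset heG hMG
    · intro a ha b hb hab
      rw [Finset.mem_insert] at ha hb
      rcases ha with rfl | ha
      · rcases hb with rfl | hb
        · exact absurd rfl hab
        · exact hedisj b hb
      · rcases hb with rfl | hb
        · exact (hedisj a ha).symm
        · exact hMmatch a ha b hb hab
  have := hMmax _ hbig
  rw [Finset.card_insert_of_notMem heM] at this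
  omega
end

section
/- Let r ≥ 1 be an integer, H an r-graph on a nonempty finite vertex set V, and p ∈ (0,1]. Let 𝒳 = {X₁,...,X_r} be a family of pairwise disjoint nonempty subsets of V, and suppose each X_i is partitioned into nonempty sets X_i^1, ..., X_i^{ℓ_i}. For each j = (j₁,...,j_r) with j_i ∈ {1,...,ℓ_i}, let 𝒳_j = {X₁^{j₁},...,X_r^{j_r}}, β_j = π(𝒳_j)/π(𝒳), and ε_j = d^p_H(𝒳_j) − d^p_H(𝒳). Then ∑_j ℰ^p_H(𝒳_j) = ℰ^p_H(𝒳) + α(𝒳)·∑_j β_j·ε_j². In particular, ∑_j ℰ^p_H(𝒳_j) ≥ ℰ^p_H(𝒳). -/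
open scoped Classical

/-- `π(𝒳) = ∏ i, |X i|`. -/
noncomputable def piX {α : Type*} {r : ℕ} (X : Fin r → Finset α) : ℝ :=
  ∏ i, ((X i).card : ℝ)

/-- `α(𝒳) = π(𝒳) / |V|^r`. -/
noncomputable def alphaX {α : Type*} [Fintype α] {r : ℕ} (X : Fin r → Finset α) : ℝ :=
  piX X / (Fintype.card α : ℝ) ^ r

/-- `e_H(𝒳)`: the number of edges of `H` with exactly one vertex in each `X i`. -/
noncomputable def eX {α : Type*} [DecidableEq α] {r : ℕ}
    (H : Finset (Finset α)) (X : Fin r → Finset α) : ℕ :=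
  (H.filter fun e => ∀ i, (e ∩ X i).card = 1).card

/-- `d^p_H(𝒳) = e_H(𝒳) / (p · π(𝒳))`. -/
noncomputable def dX {α : Type*} [DecidableEq α] {r : ℕ}
    (p : ℝ) (H : Finset (Finset α)) (X : Fin r → Finset α) : ℝ :=
  (eX H X : ℝ) / (p * piX X)

/-- `ℰ^p_H(𝒳) = α(𝒳) · (d^p_H(𝒳))²`. -/
noncomputable def enX {α : Type*} [Fintype α] [DecidableEq α] {r : ℕ}
    (p : ℝ) (H : Finset (Finset α)) (X : Fin r → Finset α) : ℝ :=
  alphaX X * (dX p H X) ^ 2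

/-- **Energy and refinements.** If each class `X i` of a family of pairwise disjoint
nonempty sets is partitioned into nonempty parts `Xs i 1, …, Xs i (ℓ i)`, then, summing
over all choices `j` of one part from each class,
`∑_j ℰ(𝒳_j) = ℰ(𝒳) + α(𝒳) ∑_j β_j ε_j²`; in particular `∑_j ℰ(𝒳_j) ≥ ℰ(𝒳)`. -/
theorem energy_refinement {α : Type*} [Fintype α] [DecidableEq α] [Nonempty α]
    (r : ℕ) (hr : 1 ≤ r) (H : Finset (Finset α)) (hH : ∀ e ∈ H, e.card = r)
    (p : ℝ) (hp0 : 0 < p) (hp1 : p ≤ 1)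
    (X : Fin r → Finset α) (hXne : ∀ i, (X i).Nonempty)
    (hXdisj : ∀ i j, i ≠ j → Disjoint (X i) (X j))
    (ℓ : Fin r → ℕ) (Xs : (i : Fin r) → Fin (ℓ i) → Finset α)
    (hne : ∀ i a, (Xs i a).Nonempty)
    (hdisj : ∀ i, ∀ a b, a ≠ b → Disjoint (Xs i a) (Xs i b))
    (hcover : ∀ i, Finset.univ.biUnion (Xs i) = X i) :
    (∑ j : (i : Fin r) → Fin (ℓ i), enX p H (fun i => Xs i (j i))) =
        enX p H X +
          alphaX X * ∑ j : (i : Fin r) → Fin (ℓ i),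
            (piX (fun i => Xs i (j i)) / piX X) *
              (dX p H (fun i => Xs i (j i)) - dX p H X) ^ 2 ∧
      enX p H X ≤ ∑ j : (i : Fin r) → Fin (ℓ i), enX p H (fun i => Xs i (j i)) := by
  -- basic positivity
  have hπj : ∀ j : (i : Fin r) → Fin (ℓ i), 0 < piX (fun i => Xs i (j i)) := by
    intro j
    refine Finset.prod_pos fun i _ => ?_
    exact_mod_cast Finset.card_pos.mpr (hne i (j i))
  have hπ : 0 < piX X := by
    refine Finset.prod_pos fun i _ => ?_
    exact_mod_cast Finset.card_pos.mpr (hXne i)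
  have hN : (0:ℝ) < (Fintype.card α : ℝ) ^ r := by
    have : 0 < Fintype.card α := Fintype.card_pos
    positivity
  -- the card of each class is the sum of the cards of its parts
  have hcard : ∀ i, ((X i).card : ℝ) = ∑ a, ((Xs i a).card : ℝ) := by
    intro i
    rw [← hcover i, Finset.card_biUnion fun a _ b _ hab => hdisj i a b hab]
    push_cast; rfl
  -- π is additive over the refinement
  have hpisum : ∑ j : (i : Fin r) → Fin (ℓ i), piX (fun i => Xs i (j i)) = piX X := by
    unfold piX
    rw [show (∏ i, ((X i).card : ℝ)) = ∏ i, ∑ a, ((Xs i a).card : ℝ) from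
      Finset.prod_congr rfl fun i _ => hcard i]
    rw [Fintype.prod_sum]
  -- e is additive over the refinement
  have hesum : ∑ j : (i : Fin r) → Fin (ℓ i), eX H (fun i => Xs i (j i)) = eX H X := by
    unfold eX
    simp only [Finset.card_filter]
    rw [Finset.sum_comm]
    refine Finset.sum_congr rfl fun e he => ?_
    have hre : e.card = r := hH e he
    have hsplit : ∀ i, (e ∩ X i).card = ∑ a, (e ∩ Xs i a).card := by
      intro i
      rw [← hcover i, Finset.inter_biUnion,
        Finset.card_biUnion fun a _ b _ hab =>
          (hdisj i a b hab).mono Finset.inter_subset_right Finset.inter_subset_right]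
    have step : ∀ j : (i : Fin r) → Fin (ℓ i),
        (if (∀ i, (e ∩ Xs i (j i)).card = 1) then (1:ℕ) else 0)
          = ∏ i, if (e ∩ Xs i (j i)).card = 1 then 1 else 0 := by
      intro j; rw [Finset.prod_boole]; simp
    simp_rw [step]
    rw [← Fintype.prod_sum (fun (i : Fin r) (a : Fin (ℓ i)) =>
      if (e ∩ Xs i a).card = 1 then (1:ℕ) else 0)]
    by_cases h : ∀ i, (e ∩ X i).card = 1
    · rw [if_pos h]
      refine Finset.prod_eq_one fun i _ => ?_
      have hs : ∑ a, (e ∩ Xs i a).card = 1 := by rw [← hsplit i, h i]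
      have hterm : ∀ a, (if (e ∩ Xs i a).card = 1 then (1:ℕ) else 0) = (e ∩ Xs i a).card := by
        intro a
        have h1 : (e ∩ Xs i a).card ≤ 1 :=
          hs ▸ Finset.single_le_sum (f := fun a => (e ∩ Xs i a).card)
            (fun _ _ => Nat.zero_le _) (Finset.mem_univ a)
        split_ifs with hc <;> omega
      simp only [hterm]; exact hs
    · rw [if_neg h]
      push_neg at h
      obtain ⟨i₀, hi₀⟩ := h
      by_contra hne0
      have hall : ∀ i, 1 ≤ (e ∩ X i).card := by
        intro i
        have hfac : (∑ a, if (e ∩ Xs i a).card = 1 then (1:ℕ) else 0) ≠ 0 := by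
          intro h0; exact hne0 (Finset.prod_eq_zero (Finset.mem_univ i) h0)
        obtain ⟨a, ha⟩ : ∃ a, (e ∩ Xs i a).card = 1 := by
          by_contra hno; push_neg at hno
          exact hfac (Finset.sum_eq_zero fun a _ => if_neg (hno a))
        have hsub : e ∩ Xs i a ⊆ e ∩ X i := by
          refine Finset.inter_subset_inter (le_refl _) ?_
          rw [← hcover i]; exact Finset.subset_biUnion_of_mem _ (Finset.mem_univ a)
        calc 1 = (e ∩ Xs i a).card := ha.symm
          _ ≤ (e ∩ X i).card := Finset.card_le_card hsub
      have hlt : ∑ _i : Fin r, (1:ℕ) < ∑ i, (e ∩ X i).card :=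
        Finset.sum_lt_sum (fun i _ => hall i)
          ⟨i₀, Finset.mem_univ i₀, by have := hall i₀; omega⟩
      have hle : ∑ i, (e ∩ X i).card ≤ e.card := by
        rw [← Finset.card_biUnion fun i _ k _ hik =>
          (hXdisj i k hik).mono Finset.inter_subset_right Finset.inter_subset_right]
        exact Finset.card_le_card (Finset.biUnion_subset.mpr fun i _ => Finset.inter_subset_left)
      simp only [Finset.sum_const, Finset.card_univ, Fintype.card_fin, smul_eq_mul,
        mul_one] at hlt
      omega
  have hesumR : ∑ j : (i : Fin r) → Fin (ℓ i), (eX H (fun i => Xs i (j i)) : ℝ) = (eX H X : ℝ) := by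
    exact_mod_cast hesum
  -- abbreviations
  set β : ((i : Fin r) → Fin (ℓ i)) → ℝ := fun j => piX (fun i => Xs i (j i)) / piX X with hβdef
  have hβnn : ∀ j, 0 ≤ β j := fun j => div_nonneg (hπj j).le hπ.le
  have hβ1 : ∑ j, β j = 1 := by
    rw [hβdef, ← Finset.sum_div, hpisum, div_self hπ.ne']
  have hβd : ∑ j, β j * dX p H (fun i => Xs i (j i)) = dX p H X := by
    have hterm : ∀ j, β j * dX p H (fun i => Xs i (j i))
        = (eX H (fun i => Xs i (j i)) : ℝ) / (p * piX X) := by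
      intro j
      have h1 := (hπj j).ne'
      have h2 := hπ.ne'
      have h3 := hp0.ne'
      rw [hβdef]
      unfold dX
      field_simp
    simp_rw [hterm]
    rw [← Finset.sum_div, hesumR]
    rfl
  have hen : ∀ j, enX p H (fun i => Xs i (j i))
      = alphaX X * (β j * dX p H (fun i => Xs i (j i)) ^ 2) := by
    intro j
    have h1 := (hπj j).ne'
    have h2 := hπ.ne'
    unfold enX alphaX
    rw [hβdef]
    field_simp
  have key : (∑ j : (i : Fin r) → Fin (ℓ i), enX p H (fun i => Xs i (j i))) =
      enX p H X + alphaX X * ∑ j : (i : Fin r) → Fin (ℓ i),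
        (piX (fun i => Xs i (j i)) / piX X) *
          (dX p H (fun i => Xs i (j i)) - dX p H X) ^ 2 := by
    simp_rw [hen]
    rw [← Finset.mul_sum]
    have hB : ∑ j : (i : Fin r) → Fin (ℓ i),
        (piX (fun i => Xs i (j i)) / piX X) *
          (dX p H (fun i => Xs i (j i)) - dX p H X) ^ 2
        = (∑ j, β j * dX p H (fun i => Xs i (j i)) ^ 2)
          - 2 * dX p H X * (∑ j, β j * dX p H (fun i => Xs i (j i)))
          + dX p H X ^ 2 * (∑ j, β j) := by
      rw [Finset.mul_sum, Finset.mul_sum, ← Finset.sum_sub_distrib, ← Finset.sum_add_distrib]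
      refine Finset.sum_congr rfl fun j _ => ?_
      rw [hβdef]
      ring
    rw [hB, hβ1, hβd]
    unfold enX
    ring
  refine ⟨key, ?_⟩
  rw [key]
  have h1 : 0 ≤ alphaX X := div_nonneg hπ.le hN.le
  have h2 : 0 ≤ ∑ j : (i : Fin r) → Fin (ℓ i),
      (piX (fun i => Xs i (j i)) / piX X) *
        (dX p H (fun i => Xs i (j i)) - dX p H X) ^ 2 :=
    Finset.sum_nonneg fun j _ => mul_nonneg (hβnn j) (sq_nonneg _)
  nlinarith [mul_nonneg h1 h2]
end

section
/- Let r ≥ 1 be an integer, H an r-graph on a nonempty finite vertex set V, p ∈ (0,1], and ε ∈ (0,1]. Let 𝒳 = {X₁,...,X_r} be a family of pairwise disjoint nonempty subsets of V, and suppose there exist X_i^1 ⊆ X_i with |X_i^1| ≥ ε·|X_i| for each i = 1,...,r such that, setting 𝒳^1 = {X₁^1,...,X_r^1}, one has |d^p_H(𝒳^1) − d^p_H(𝒳)| > ε. Set X_i^2 = X_i ∖ X_i^1 and, for each j = (j₁,...,j_r) ∈ {1,2}^r, let 𝒳_j = {X₁^{j₁},...,X_r^{j_r}} (with the convention that ℰ^p_H(𝒳_j)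 = 0 if some X_i^{j_i} is empty). Then ∑_{j ∈ {1,2}^r} ℰ^p_H(𝒳_j) ≥ ℰ^p_H(𝒳) + α(𝒳)·ε^{r+2}. -/
/-! The cells `𝒳_j` carry weights `α(𝒳_j)` summing to `α(𝒳)`, and since every edge of
`E(𝒳)` lies in some cell, the weighted mean of the densities `d(𝒳_j)` is at least `d(𝒳)`.
Hence the energy of the refinement exceeds `ℰ(𝒳)` by at least the weighted variance
`∑ α(𝒳_j) (d(𝒳_j) - d(𝒳))²`, and the single cell `𝒳^1`, of weight at least `ε^r α(𝒳)` and
deviation more than `ε`, already contributes `α(𝒳) ε^{r+2}`. -/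

open scoped Classical

open Finset

theorem mul_sq_add_sum_mul_sub_sq_le_sum_mul_sq {ι : Type*} (s : Finset ι) (w x : ι → ℝ)
    {m : ℝ} (hm : 0 ≤ m) (hmean : (∑ i ∈ s, w i) * m ≤ ∑ i ∈ s, w i * x i) :
    (∑ i ∈ s, w i) * m ^ 2 + ∑ i ∈ s, w i * (x i - m) ^ 2 ≤ ∑ i ∈ s, w i * x i ^ 2 := by
  have hexpand : ∑ i ∈ s, w i * x i ^ 2 =
      ∑ i ∈ s, w i * (x i - m) ^ 2 + 2 * m * ∑ i ∈ s, w i * x i - m ^ 2 * ∑ i ∈ s, w i := by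
    rw [mul_sum, mul_sum, ← sum_add_distrib, ← sum_sub_distrib]
    exact sum_congr rfl fun i _ => by ring
  nlinarith [mul_le_mul_of_nonneg_left hmean hm]

theorem card_inter_sdiff_add_card_inter {α : Type*} [DecidableEq α] (e : Finset α)
    {s t : Finset α} (h : s ⊆ t) : #(e ∩ (t \ s)) + #(e ∩ s) = #(e ∩ t) := by
  rw [show e ∩ (t \ s) = (e ∩ t) \ (e ∩ s) from inf_sdiff_distrib_left e t s]
  exact card_sdiff_add_card_eq_card (inter_subset_inter_left h)

section Energy

variable {α : Type*} {r : ℕ}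

theorem piX_nonneg (X : Fin r → Finset α) : 0 ≤ piX X := by
  unfold piX
  positivity

theorem alphaX_nonneg [Fintype α] (X : Fin r → Finset α) : 0 ≤ alphaX X :=
  div_nonneg (piX_nonneg X) (by positivity)

theorem pow_mul_alphaX_le_alphaX [Fintype α] {ε : ℝ} (hε : 0 ≤ ε) {X X1 : Fin r → Finset α}
    (hsize : ∀ i, ε * #(X i) ≤ #(X1 i)) : ε ^ r * alphaX X ≤ alphaX X1 := by
  have hπ : ε ^ r * piX X ≤ piX X1 :=
    calc ε ^ r * piX X = ∏ i, ε * (#(X i) : ℝ) := by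
          rw [piX, prod_mul_distrib, prod_const, card_univ, Fintype.card_fin]
      _ ≤ piX X1 := prod_le_prod (fun i _ => by positivity) fun i _ => hsize i
  unfold alphaX
  rw [← mul_div_assoc]
  gcongr

variable [DecidableEq α]

theorem dX_nonneg {p : ℝ} (hp : 0 ≤ p) (H : Finset (Finset α)) (X : Fin r → Finset α) :
    0 ≤ dX p H X :=
  div_nonneg (Nat.cast_nonneg _) (mul_nonneg hp (piX_nonneg X))

theorem eX_eq_zero_of_eq_empty (H : Finset (Finset α)) {X : Fin r → Finset α} {i : Fin r}
    (h : X i = ∅) : eX H X = 0 := by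
  simp only [eX, card_eq_zero, filter_eq_empty_iff]
  intro e _ hcard
  simpa [h] using hcard i

theorem alphaX_mul_dX [Fintype α] (p : ℝ) (H : Finset (Finset α)) (X : Fin r → Finset α) :
    alphaX X * dX p H X = eX H X / (p * Fintype.card α ^ r) := by
  by_cases hπ : piX X = 0
  · obtain ⟨i, -, hi⟩ := prod_eq_zero_iff.mp hπ
    rw [eX_eq_zero_of_eq_empty H (card_eq_zero.mp (by exact_mod_cast hi))]
    simp [alphaX, hπ]
  · unfold alphaX dX
    field_simp

def cellX (X X1 : Fin r → Finset α) (j : Fin r → Fin 2) : Fin r → Finset α :=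
  fun i => if j i = 0 then X1 i else X i \ X1 i

theorem cellX_zero (X X1 : Fin r → Finset α) : cellX X X1 0 = X1 :=
  funext fun _ => if_pos rfl

theorem sum_piX_cellX {X X1 : Fin r → Finset α} (hsub : ∀ i, X1 i ⊆ X i) :
    ∑ j, piX (cellX X X1 j) = piX X := by
  have hcard (i : Fin r) : ∑ k : Fin 2, (#(cellX X X1 (fun _ => k) i) : ℝ) = #(X i) := by
    simp only [cellX, Fin.sum_univ_two, if_pos, Fin.one_eq_zero_iff, OfNat.ofNat_ne_one,
      if_false]
    exact_mod_cast add_comm _ _ |>.trans (card_sdiff_add_card_eq_card (hsub i))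
  simp only [piX, ← hcard, prod_univ_sum, Fintype.piFinset_univ]
  rfl

theorem sum_alphaX_cellX [Fintype α] {X X1 : Fin r → Finset α} (hsub : ∀ i, X1 i ⊆ X i) :
    ∑ j, alphaX (cellX X X1 j) = alphaX X := by
  simp only [alphaX, ← sum_div, sum_piX_cellX hsub]

theorem eX_le_sum_eX_cellX (H : Finset (Finset α)) {X X1 : Fin r → Finset α}
    (hsub : ∀ i, X1 i ⊆ X i) : eX H X ≤ ∑ j, eX H (cellX X X1 j) := by
  refine (card_le_card fun e he => ?_).trans card_biUnion_le
  simp only [mem_filter, mem_biUnion, mem_univ, true_and] at he ⊢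
  refine ⟨fun i => if #(e ∩ X1 i) = 1 then 0 else 1, he.1, fun i => ?_⟩
  have hsplit := card_inter_sdiff_add_card_inter e (hsub i)
  by_cases h : #(e ∩ X1 i) = 1
  · simp [cellX, h]
  · simp only [cellX, h, if_false, Fin.one_eq_zero_iff, OfNat.ofNat_ne_one]
    have := he.2 i
    omega

theorem alphaX_mul_dX_le_sum_cellX [Fintype α] {p : ℝ} (hp : 0 ≤ p) (H : Finset (Finset α))
    {X X1 : Fin r → Finset α} (hsub : ∀ i, X1 i ⊆ X i) :
    alphaX X * dX p H X ≤ ∑ j, alphaX (cellX X X1 j) * dX p H (cellX X X1 j) := by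
  simp only [alphaX_mul_dX, ← sum_div]
  gcongr
  exact_mod_cast eX_le_sum_eX_cellX H hsub

end Energy

theorem energy_boost_general {α : Type*} [Fintype α] [DecidableEq α]
    (r : ℕ) (H : Finset (Finset α))
    (p : ℝ) (hp0 : 0 < p) (ε : ℝ) (hε0 : 0 < ε)
    (X : Fin r → Finset α)
    (X1 : Fin r → Finset α) (hsub : ∀ i, X1 i ⊆ X i)
    (hX1size : ∀ i, ε * ((X i).card : ℝ) ≤ ((X1 i).card : ℝ))
    (hirreg : ε < |dX p H X1 - dX p H X|) :
    enX p H X + alphaX X * ε ^ (r + 2) ≤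
      ∑ j : Fin r → Fin 2,
        enX p H (fun i => if j i = 0 then X1 i else X i \ X1 i) := by
  set d := dX p H X
  have hvariance := mul_sq_add_sum_mul_sub_sq_le_sum_mul_sq univ
    (fun j => alphaX (cellX X X1 j)) (fun j => dX p H (cellX X X1 j)) (dX_nonneg hp0.le H X)
    (by simpa only [sum_alphaX_cellX hsub] using alphaX_mul_dX_le_sum_cellX hp0.le H hsub)
  rw [sum_alphaX_cellX hsub] at hvariance
  have hgain : alphaX X * ε ^ (r + 2) ≤
      ∑ j, alphaX (cellX X X1 j) * (dX p H (cellX X X1 j) - d) ^ 2 :=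
    calc alphaX X * ε ^ (r + 2) = ε ^ r * alphaX X * ε ^ 2 := by ring
      _ ≤ alphaX X1 * (dX p H X1 - d) ^ 2 :=
          mul_le_mul (pow_mul_alphaX_le_alphaX hε0.le hX1size)
            (sq_le_sq.mpr (by rw [abs_of_pos hε0]; exact hirreg.le)) (by positivity)
            (alphaX_nonneg X1)
      _ = alphaX (cellX X X1 0) * (dX p H (cellX X X1 0) - d) ^ 2 := by rw [cellX_zero]
      _ ≤ _ := single_le_sum
          (f := fun j => alphaX (cellX X X1 j) * (dX p H (cellX X X1 j) - d) ^ 2)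
          (fun j _ => mul_nonneg (alphaX_nonneg _) (sq_nonneg _)) (mem_univ 0)
  show alphaX X * d ^ 2 + _ ≤ ∑ j, alphaX (cellX X X1 j) * dX p H (cellX X X1 j) ^ 2
  linarith

/-- **Energy boost from an irregular witness.** If `X₁^1 ⊆ X₁, …, X_r^1 ⊆ X_r` with
`|X_i^1| ≥ ε |X_i|` witness irregularity, i.e. `|d(𝒳^1) - d(𝒳)| > ε`, then the energy
of the refinement by `X_i^1, X_i^2 = X_i \ X_i^1` gains at least `α(𝒳) ε^{r+2}`. -/
theorem energy_boost {α : Type*} [Fintype α] [DecidableEq α] [Nonempty α]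
    (r : ℕ) (hr : 1 ≤ r) (H : Finset (Finset α)) (hH : ∀ e ∈ H, e.card = r)
    (p : ℝ) (hp0 : 0 < p) (hp1 : p ≤ 1) (ε : ℝ) (hε0 : 0 < ε) (hε1 : ε ≤ 1)
    (X : Fin r → Finset α) (hXne : ∀ i, (X i).Nonempty)
    (hXdisj : ∀ i j, i ≠ j → Disjoint (X i) (X j))
    (X1 : Fin r → Finset α) (hsub : ∀ i, X1 i ⊆ X i)
    (hX1size : ∀ i, ε * ((X i).card : ℝ) ≤ ((X1 i).card : ℝ))
    (hirreg : ε < |dX p H X1 - dX p H X|) :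
    enX p H X + alphaX X * ε ^ (r + 2) ≤
      ∑ j : Fin r → Fin 2,
        enX p H (fun i => if j i = 0 then X1 i else X i \ X1 i) :=
  energy_boost_general r H p hp0 ε hε0 X X1 hsub hX1size hirreg
end

section
/- Let r, q ≥ 2 be integers, let x₁, ..., x_q be positive integers with x₁ + x₂ + ⋯ + x_q = r + q − 1, and let n be a positive integer divisible by r + q − 1. Then there exists a q-colouring of the r-element subsets of [n] such that for every colour i ∈ [q], every matching consisting of r-element subsets of colour i has size at most n/(r+q−1); in particular, every monochromatic matching has size at most n/(r+q−1). -/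
/-- **A family of extremal colourings.** Let `r, q ≥ 2`, let `x₁, …, x_q` be positive
integers with `x₁ + ⋯ + x_q = r + q - 1`, and let `n` be a positive multiple of
`r + q - 1`. Then there is a `q`-colouring of the `r`-subsets of `[n]` such that for
every colour `i`, every matching consisting of `r`-sets of colour `i` has size at most
`n / (r + q - 1)`; in particular every monochromatic matching has size at most
`n / (r + q - 1)`. -/
theorem extremal_colouring (r q : ℕ) (hr : 2 ≤ r) (hq : 2 ≤ q)
    (x : Fin q → ℕ) (hx : ∀ i, 0 < x i) (hsum : ∑ i, x i = r + q - 1)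
    (n : ℕ) (hn : 0 < n) (hdvd : (r + q - 1) ∣ n) :
    ∃ c : Finset (Fin n) → Fin q,
      ∀ i : Fin q, ∀ M : Finset (Finset (Fin n)),
        (∀ e ∈ M, e.card = r) →
        (∀ e ∈ M, ∀ f ∈ M, e ≠ f → Disjoint e f) →
        (∀ e ∈ M, c e = i) →
        M.card ≤ n / (r + q - 1) := by
  set d := r + q - 1 with hd
  set m := n / d with hm
  have hdm : m * d = n := Nat.div_mul_cancel hdvd
  set x' : ℕ → ℕ := fun j => if h : j < q then x ⟨j, h⟩ else 0 with hx'
  set B : ℕ → ℕ := fun k => m * ∑ j ∈ Finset.range k, x' j with hB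
  have hBq : B q = n := by
    have h1 : ∑ j ∈ Finset.range q, x' j = d := by
      rw [← Fin.sum_univ_eq_sum_range, ← hsum]
      exact Finset.sum_congr rfl (fun i _ => by simp [hx'])
    simp only [hB, h1, hdm]
  have hBmono : Monotone B := fun a b hab =>
    Nat.mul_le_mul_left _ (Finset.sum_le_sum_of_subset (Finset.range_subset_range.2 hab))
  have hPfind : ∀ v : Fin n, ∃ k, v.val < B k := fun v => ⟨q, by rw [hBq]; exact v.2⟩
  have hfq : ∀ v : Fin n, Nat.find (hPfind v) - 1 < q := by
    intro v
    have h1 : Nat.find (hPfind v) ≤ q := Nat.find_le (by rw [hBq]; exact v.2)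
    have h2 : Nat.find (hPfind v) ≠ 0 := by
      intro h0
      have := Nat.find_spec (hPfind v)
      rw [h0] at this
      simp [hB] at this
    omega
  set f : Fin n → Fin q := fun v => ⟨Nat.find (hPfind v) - 1, hfq v⟩ with hf
  have key : ∀ (v : Fin n) (i : Fin q),
      f v = i ↔ (B i.val ≤ v.val ∧ v.val < B (i.val + 1)) := by
    intro v i
    have h2 : Nat.find (hPfind v) ≠ 0 := by
      intro h0
      have := Nat.find_spec (hPfind v)
      rw [h0] at this
      simp [hB] at this
    constructor
    · intro hvi
      have hval : Nat.find (hPfind v) - 1 = i.val := congrArg Fin.val hvi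
      have hk : Nat.find (hPfind v) = i.val + 1 := by omega
      constructor
      · have := Nat.find_min (hPfind v) (m := i.val) (by omega)
        omega
      · have := Nat.find_spec (hPfind v)
        rwa [hk] at this
    · rintro ⟨h1, h3⟩
      have hle : Nat.find (hPfind v) ≤ i.val + 1 := Nat.find_le h3
      have hgt : i.val < Nat.find (hPfind v) := by
        by_contra hcon
        push_neg at hcon
        have := Nat.find_spec (hPfind v)
        have hmon := hBmono hcon
        omega
      apply Fin.ext
      simp only [hf]
      omega
  -- size of the fibers of `f`
  have hfiber : ∀ i : Fin q,
      (Finset.univ.filter (fun v : Fin n => f v = i)).card = m * x i := by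
    intro i
    have hmap : (Finset.univ.filter (fun v : Fin n => f v = i)).map
        ⟨Fin.val, Fin.val_injective⟩ = Finset.Ico (B i.val) (B (i.val + 1)) := by
      ext a
      simp only [Finset.mem_map, Finset.mem_filter, Finset.mem_univ, true_and,
        Function.Embedding.coeFn_mk, Finset.mem_Ico]
      constructor
      · rintro ⟨v, hv, rfl⟩
        exact (key v i).1 hv
      · rintro ⟨h1, h3⟩
        have han : a < n := lt_of_lt_of_le h3 (by rw [← hBq]; exact hBmono i.2)
        exact ⟨⟨a, han⟩, (key ⟨a, han⟩ i).2 ⟨h1, h3⟩, rfl⟩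
    have hcard := congrArg Finset.card hmap
    rw [Finset.card_map, Nat.card_Ico] at hcard
    rw [hcard]
    have hsucc : ∑ j ∈ Finset.range (i.val + 1), x' j
        = ∑ j ∈ Finset.range i.val, x' j + x' i.val := Finset.sum_range_succ _ _
    have hxi : x' i.val = x i := by simp [hx']
    simp only [hB, hsucc, hxi, Nat.mul_add]
    omega
  -- the colouring
  set S : Finset (Fin n) → Finset (Fin q) := fun e =>
    Finset.univ.filter (fun i : Fin q => x i ≤ (e.filter (fun v => f v = i)).card)
    with hS
  set c : Finset (Fin n) → Fin q := fun e =>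
    if h : (S e).Nonempty then (S e).min' h else ⟨0, by omega⟩ with hc
  have hcmem : ∀ e : Finset (Fin n), e.card = r →
      x (c e) ≤ (e.filter (fun v => f v = c e)).card := by
    intro e he
    have hne : (S e).Nonempty := by
      by_contra hcon
      rw [Finset.not_nonempty_iff_eq_empty] at hcon
      have hlt : ∀ i : Fin q, (e.filter (fun v => f v = i)).card ≤ x i - 1 := by
        intro i
        have : i ∉ S e := by rw [hcon]; exact Finset.notMem_empty i
        simp only [hS, Finset.mem_filter, Finset.mem_univ, true_and, not_le] at this
        omega
      have hsum1 : e.card = ∑ i : Fin q, (e.filter (fun v => f v = i)).card :=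
        Finset.card_eq_sum_card_fiberwise (fun v _ => Finset.mem_univ (f v))
      have hsum2 : ∑ i : Fin q, (e.filter (fun v => f v = i)).card
          ≤ ∑ i : Fin q, (x i - 1) := Finset.sum_le_sum (fun i _ => hlt i)
      have hsum3 : ∑ i : Fin q, (x i - 1) + q = d := by
        rw [← hsum]
        have h0 : ∑ i : Fin q, ((x i - 1) + 1) = ∑ i : Fin q, x i :=
          Finset.sum_congr rfl (fun i _ => by have := hx i; omega)
        rw [Finset.sum_add_distrib] at h0
        simp only [Finset.sum_const, Finset.card_univ, Fintype.card_fin,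
          smul_eq_mul, mul_one] at h0
        omega
      omega
    have : c e ∈ S e := by
      rw [hc]
      simp only [hne, dif_pos]
      exact (S e).min'_mem hne
    simp only [hS, Finset.mem_filter] at this
    exact this.2
  refine ⟨c, ?_⟩
  intro i M hMcard hMdisj hMcol
  have hterm : ∀ e ∈ M, x i ≤ (e.filter (fun v => f v = i)).card := by
    intro e he
    have := hcmem e (hMcard e he)
    rwa [hMcol e he] at this
  have hdisj' : ∀ e ∈ M, ∀ g ∈ M, e ≠ g →
      Disjoint (e.filter (fun v => f v = i)) (g.filter (fun v => f v = i)) := by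
    intro e he g hg hne
    exact Finset.disjoint_filter_filter (hMdisj e he g hg hne)
  have hbi : ∑ e ∈ M, (e.filter (fun v => f v = i)).card
      = (M.biUnion (fun e => e.filter (fun v => f v = i))).card :=
    (Finset.card_biUnion hdisj').symm
  have hsub : M.biUnion (fun e => e.filter (fun v => f v = i))
      ⊆ Finset.univ.filter (fun v : Fin n => f v = i) := by
    intro v hv
    rw [Finset.mem_biUnion] at hv
    obtain ⟨e, _, hv⟩ := hv
    rw [Finset.mem_filter] at hv ⊢
    exact ⟨Finset.mem_univ v, hv.2⟩
  have hub : ∑ e ∈ M, (e.filter (fun v => f v = i)).card ≤ m * x i := by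
    rw [hbi, ← hfiber i]
    exact Finset.card_le_card hsub
  have hlb : M.card * x i ≤ ∑ e ∈ M, (e.filter (fun v => f v = i)).card := by
    have := Finset.card_nsmul_le_sum M (fun e => (e.filter (fun v => f v = i)).card)
      (x i) hterm
    simpa using this
  exact Nat.le_of_mul_le_mul_right (le_trans hlb hub) (hx i)
end
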